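/- arXiv:2409.01084 — 7 statements merged into one kernel-verified Lean document; each statement's English description precedes it below -/
import Mathlib

section
/- Let φ : ℤ^ℓ → ℤ^ℓ be a ℤ-linear map with matrix A. Then the function q ↦ #ker(φ_q) (cardinality of the kernel of the induced map on (ℤ/qℤ)^ℓ) is a quasi-polynomial in q whose constituents depend on the residue r of q modulo e_r only through gcd(e_r, q), where e_r is the largest elementary divisor of A; in particular #ker(φ_q) depends on q only through gcd(e_r, q) and q itself via the monomial factor q^{ℓ−rank A}. -/
/-!
Choosing unimodular `S`, `T` with `S * A * T = diagonal dd` (Smith normal form), right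
multiplication by the reductions of `S` and `T` is bijective on `(ℤ/qℤ)^ℓ`, so
`#ker(φ_q) = ∏ᵢ #{y : ℤ/qℤ | y * dd i = 0} = ∏ᵢ gcd(dd i, q)`. The zero elementary divisors
contribute `gcd(0, q) = q`, giving the monomial `q^(ℓ - rank A)`; every nonzero one divides
`e_r`, so `gcd(dd i, q) = gcd(dd i, gcd(e_r, q))`.
-/

/-- Cardinality of the kernel of the map on `(ℤ/qℤ)^ℓ` induced by the integer
matrix `A` (acting by right multiplication on row vectors). -/
noncomputable def kerCard {ℓ : ℕ} (A : Matrix (Fin ℓ) (Fin ℓ) ℤ) (q : ℕ) : ℕ :=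
  Nat.card {x : Fin ℓ → ZMod q // Matrix.vecMul x (A.map (Int.cast : ℤ → ZMod q)) = 0}

open Matrix

theorem ZMod.card_mul_intCast_eq_zero (q : ℕ) [NeZero q] (c : ℤ) :
    Nat.card {y : ZMod q // y * c = 0} = Int.gcd c q := by
  have hmem (y : ZMod q) : y * c = 0 ↔ y ∈ (nsmulAddMonoidHom c.natAbs).ker := by
    rw [AddMonoidHom.mem_ker, nsmulAddMonoidHom_apply, nsmul_eq_mul, mul_comm]
    rcases Int.natAbs_eq c with hc | hc <;> rw [hc] <;> simp
  rw [Nat.card_congr (Equiv.subtypeEquivRight hmem), IsAddCyclic.card_nsmulAddMonoidHom_ker,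
    Nat.card_zmod, Nat.gcd_comm]
  rfl

theorem Matrix.card_ker_vecMul_diagonal {ι R : Type*} [Fintype ι] [DecidableEq ι] [Semiring R]
    (d : ι → R) :
    Nat.card {x : ι → R // x ᵥ* diagonal d = 0} = ∏ i, Nat.card {y : R // y * d i = 0} := by
  have hker (x : ι → R) : x ᵥ* diagonal d = 0 ↔ ∀ i, x i * d i = 0 := by
    simp only [funext_iff, vecMul_diagonal, Pi.zero_apply]
  rw [Nat.card_congr ((Equiv.subtypeEquivRight hker).trans
    (Equiv.subtypePiEquivPi (p := fun i (y : R) => y * d i = 0))), Nat.card_pi]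

section Unimodular

variable {n R : Type*} [Fintype n] [DecidableEq n] [CommRing R] {S T : Matrix n n R}

theorem Matrix.vecMul_mul_eq_zero_iff (B : Matrix n n R) (hT : IsUnit T.det) (x : n → R) :
    x ᵥ* (B * T) = 0 ↔ x ᵥ* B = 0 := by
  rw [← vecMul_vecMul]
  exact (vecMul_injective_of_isUnit ((isUnit_iff_isUnit_det T).mpr hT)).eq_iff' (zero_vecMul T)

theorem Matrix.card_ker_vecMul_mul_left (B : Matrix n n R) (hS : IsUnit S.det) :
    Nat.card {x : n → R // x ᵥ* (S * B) = 0} = Nat.card {x : n → R // x ᵥ* B = 0} := by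
  have hSunit := (isUnit_iff_isUnit_det S).mpr hS
  have hbij : Function.Bijective (· ᵥ* S) :=
    ⟨vecMul_injective_of_isUnit hSunit, vecMul_surjective_iff_isUnit.mpr hSunit⟩
  refine Nat.card_congr (Equiv.subtypeEquiv (Equiv.ofBijective _ hbij) fun x => ?_)
  rw [Equiv.ofBijective_apply, vecMul_vecMul]

theorem Matrix.card_ker_vecMul_unimodular_mul (B : Matrix n n R) (hS : IsUnit S.det)
    (hT : IsUnit T.det) :
    Nat.card {x : n → R // x ᵥ* (S * B * T) = 0} = Nat.card {x : n → R // x ᵥ* B = 0} := by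
  simp_rw [vecMul_mul_eq_zero_iff _ hT]
  exact card_ker_vecMul_mul_left B hS

end Unimodular

theorem Matrix.isUnit_det_map {n R R' : Type*} [Fintype n] [DecidableEq n] [CommRing R]
    [CommRing R'] (f : R →+* R') {M : Matrix n n R} (hM : IsUnit M.det) :
    IsUnit (M.map f).det := by
  rw [← RingHom.mapMatrix_apply, ← RingHom.map_det]
  exact hM.map f

theorem kerCard_eq_prod_gcd {ℓ : ℕ} {A S T : Matrix (Fin ℓ) (Fin ℓ) ℤ} {dd : Fin ℓ → ℤ}
    (hS : IsUnit S.det) (hT : IsUnit T.det) (hSNF : S * A * T = diagonal dd)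
    (q : ℕ) [NeZero q] :
    kerCard A q = ∏ i, Int.gcd (dd i) q := by
  let f := Int.castRingHom (ZMod q)
  have hmap : (S * A * T).map f = S.map f * A.map f * T.map f := by
    rw [Matrix.map_mul, Matrix.map_mul]
  rw [kerCard, ← card_ker_vecMul_unimodular_mul _ (isUnit_det_map f hS) (isUnit_det_map f hT)]
  change Nat.card {x // x ᵥ* (S.map f * A.map f * T.map f) = 0} = _
  rw [← hmap, hSNF, diagonal_map (map_zero f), card_ker_vecMul_diagonal]
  exact Finset.prod_congr rfl fun i _ => ZMod.card_mul_intCast_eq_zero q (dd i)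

theorem Fin.prod_eq_prod_lt_mul_pow {M : Type*} [CommMonoid M] {ℓ r : ℕ} (hr : r ≤ ℓ)
    (f : Fin ℓ → M) (c : M) (hf : ∀ i : Fin ℓ, r ≤ (i : ℕ) → f i = c) :
    ∏ i, f i = (∏ i : Fin ℓ, if (i : ℕ) < r then f i else 1) * c ^ (ℓ - r) := by
  have hcard : (Finset.univ.filter fun i : Fin ℓ => ¬ (i : ℕ) < r).card = ℓ - r := by
    rw [Finset.filter_not, Finset.card_sdiff_of_subset (Finset.filter_subset _ _),
      Fin.card_filter_val_lt, Finset.card_univ, Fintype.card_fin, min_eq_right hr]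
  calc ∏ i, f i = ∏ i : Fin ℓ, if (i : ℕ) < r then f i else c :=
        Finset.prod_congr rfl fun i _ => by split_ifs with hi; exacts [rfl, hf i (not_lt.mp hi)]
    _ = _ := by rw [Finset.prod_ite, Finset.prod_filter, Finset.prod_const, hcard]

theorem Int.gcd_eq_gcd_gcd_of_dvd {d : ℤ} {e : ℕ} (hd : d ∣ e) (q : ℕ) :
    Int.gcd d q = Int.gcd d (Nat.gcd e q) := by
  have hde : d.natAbs ∣ e := Int.natAbs_dvd_natAbs.mpr hd
  change Nat.gcd d.natAbs q = Nat.gcd d.natAbs (Nat.gcd e q)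
  rw [← Nat.gcd_assoc, Nat.gcd_eq_left hde]

open Polynomial in
theorem stmt1_general (ℓ r : ℕ) (hr : r ≤ ℓ) (A : Matrix (Fin ℓ) (Fin ℓ) ℤ)
    (S T : Matrix (Fin ℓ) (Fin ℓ) ℤ) (hS : IsUnit S.det) (hT : IsUnit T.det)
    (dd : Fin ℓ → ℤ)
    (hSNF : S * A * T = Matrix.diagonal dd)
    (hzero : ∀ i : Fin ℓ, r ≤ (i : ℕ) → dd i = 0)
    (hdvd : ∀ i j : Fin ℓ, i ≤ j → (j : ℕ) < r → dd i ∣ dd j)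
    (er : ℕ)
    (her : (r = 0 ∧ er = 1) ∨ ∃ i : Fin ℓ, (i : ℕ) + 1 = r ∧ (er : ℤ) = dd i) :
    ∃ g : ℕ → Polynomial ℤ,
      (∀ q : ℕ, 0 < q → (kerCard A q : ℤ) = (g (Nat.gcd er q)).eval (q : ℤ)) ∧
      (∀ q : ℕ, 0 < q →
        (kerCard A q : ℤ) =
          (∏ i : Fin ℓ, if (i : ℕ) < r then (Int.gcd (dd i) (q : ℤ) : ℤ) else 1)
            * (q : ℤ) ^ (ℓ - r)) := by
  have hker (q : ℕ) (hq : 0 < q) : (kerCard A q : ℤ) =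
      (∏ i : Fin ℓ, if (i : ℕ) < r then (Int.gcd (dd i) (q : ℤ) : ℤ) else 1)
        * (q : ℤ) ^ (ℓ - r) := by
    have : NeZero q := NeZero.of_pos hq
    rw [kerCard_eq_prod_gcd hS hT hSNF, Nat.cast_prod]
    exact Fin.prod_eq_prod_lt_mul_pow hr _ _ fun i hi => by simp [hzero i hi]
  have hdvd_er (i : Fin ℓ) (hi : (i : ℕ) < r) : dd i ∣ er := by
    rcases her with ⟨rfl, -⟩ | ⟨j, hj, hjer⟩
    · exact absurd hi (Nat.not_lt_zero _)
    · exact hjer ▸ hdvd i j (Fin.le_def.mpr (by omega)) (by omega)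
  refine ⟨fun e => C (∏ i : Fin ℓ, if (i : ℕ) < r then (Int.gcd (dd i) e : ℤ) else 1) *
    X ^ (ℓ - r), fun q hq => ?_, hker⟩
  rw [hker q hq, eval_mul, eval_C, eval_pow, eval_X]
  congr 1
  refine Finset.prod_congr rfl fun i _ => ?_
  split_ifs with hi
  · rw [Int.gcd_eq_gcd_gcd_of_dvd (hdvd_er i hi)]
  · rfl

/-- `q ↦ #ker(φ_q)` is a quasi-polynomial in `q` whose constituents
depend on `q` only through `gcd(er, q)`, where `er` is the largest elementary
divisor of `A` (equal to `1` when `rank A = 0`); moreover each constituent is the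
monomial `(∏_j gcd(e_j, q)) · q^(ℓ - rank A)`, so `#ker(φ_q)` depends only on
`gcd(er, q)` and the monomial factor `q^(ℓ - rank A)`. -/
theorem stmt1 (ℓ r : ℕ) (hr : r ≤ ℓ) (A : Matrix (Fin ℓ) (Fin ℓ) ℤ)
    (S T : Matrix (Fin ℓ) (Fin ℓ) ℤ) (hS : IsUnit S.det) (hT : IsUnit T.det)
    (dd : Fin ℓ → ℤ)
    (hSNF : S * A * T = Matrix.diagonal dd)
    (hpos : ∀ i : Fin ℓ, (i : ℕ) < r → 0 < dd i)
    (hzero : ∀ i : Fin ℓ, r ≤ (i : ℕ) → dd i = 0)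
    (hdvd : ∀ i j : Fin ℓ, i ≤ j → (j : ℕ) < r → dd i ∣ dd j)
    (er : ℕ)
    (her : (r = 0 ∧ er = 1) ∨ ∃ i : Fin ℓ, (i : ℕ) + 1 = r ∧ (er : ℤ) = dd i) :
    ∃ g : ℕ → Polynomial ℤ,
      (∀ q : ℕ, 0 < q → (kerCard A q : ℤ) = (g (Nat.gcd er q)).eval (q : ℤ)) ∧
      (∀ q : ℕ, 0 < q →
        (kerCard A q : ℤ) =
          (∏ i : Fin ℓ, if (i : ℕ) < r then (Int.gcd (dd i) (q : ℤ) : ℤ) else 1)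
            * (q : ℤ) ^ (ℓ - r)) :=
  stmt1_general ℓ r hr A S T hS hT dd hSNF hzero hdvd er her
end

section
/- Let Γ be a finite group acting on L ≅ ℤ^ℓ via ρ : Γ → GL(L), and let χ_i be an irreducible character of Γ. Then the multiplicity m(χ_i; q) of χ_i in the permutation character of Γ acting on L/qL satisfies m(χ_i; q) = (1/#Γ) Σ_{γ∈Γ} χ_i(γ) · (∏_{j=1}^{r(γ)} gcd(e_{γ,j}, q)) · q^{ℓ−r(γ)}, where r(γ) = rank(R_γ − I_ℓ) and e_{γ,j} are the elementary divisors of R_γ − I_ℓ. In particular, m(χ_i; q) is a quasi-polynomial in q. -/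
open Matrix

/-- Number of fixed points of the matrix `M` acting on row vectors of `(ℤ/qℤ)^ℓ`. -/
noncomputable def fixCard {ℓ : ℕ} (M : Matrix (Fin ℓ) (Fin ℓ) ℤ) (q : ℕ) : ℕ :=
  Nat.card {x : Fin ℓ → ZMod q // Matrix.vecMul x (M.map (Int.cast : ℤ → ZMod q)) = x}

lemma card_filter_lt' (ℓ k : ℕ) (h : k ≤ ℓ) :
    (Finset.univ.filter (fun i : Fin ℓ => (i : ℕ) < k)).card = k := by
  classical
  rw [← Fintype.card_subtype]
  have e : {i : Fin ℓ // (i : ℕ) < k} ≃ Fin k :=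
    ⟨fun x => ⟨x.1.1, x.2⟩, fun j => ⟨⟨j.1, j.2.trans_le h⟩, j.2⟩,
      fun x => rfl, fun j => rfl⟩
  rw [Fintype.card_congr e, Fintype.card_fin]

lemma card_filter_not_lt (ℓ k : ℕ) (h : k ≤ ℓ) :
    (Finset.univ.filter (fun i : Fin ℓ => ¬ (i : ℕ) < k)).card = ℓ - k := by
  classical
  have h1 := Finset.card_filter_add_card_filter_not
    (s := (Finset.univ : Finset (Fin ℓ))) (p := fun i : Fin ℓ => (i : ℕ) < k)
  rw [card_filter_lt' ℓ k h] at h1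
  simp only [Finset.card_univ, Fintype.card_fin] at h1
  omega

lemma gcd_mod_invariant (a n q : ℕ) (h : a ∣ n) :
    Nat.gcd a (q % n) = Nat.gcd a q := by
  rw [Nat.gcd_rec a (q % n), Nat.gcd_rec a q, Nat.mod_mod_of_dvd q h]

-- counting lemma
lemma card_ann (q : ℕ) (hq : 0 < q) (m : ℕ) :
    Nat.card {y : ZMod q // y * (m : ZMod q) = 0} = Nat.gcd m q := by
  haveI : NeZero q := ⟨hq.ne'⟩
  set f : ZMod q →+ ZMod q := AddMonoidHom.mulRight (m : ZMod q) with hf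
  have hker : ∀ y : ZMod q, y ∈ f.ker ↔ y * (m : ZMod q) = 0 := by
    intro y; simp [hf, AddMonoidHom.mem_ker]
  have hrange : f.range = AddSubgroup.zmultiples ((m : ZMod q)) := by
    ext y
    constructor
    · rintro ⟨x, rfl⟩
      exact ⟨(x.val : ℤ), by
        show (x.val : ℤ) • (m : ZMod q) = f x
        rw [zsmul_eq_mul, Int.cast_natCast, ZMod.natCast_val, ZMod.cast_id]
        simp [hf]⟩
    · rintro ⟨k, rfl⟩
      exact ⟨(k : ZMod q), by simp [hf, zsmul_eq_mul]⟩
  have h1 : f.ker.index * Nat.card f.ker = Nat.card (ZMod q) := f.ker.index_mul_card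
  have h2 : f.ker.index = Nat.card f.range := AddSubgroup.index_ker f
  have h3 : Nat.card f.range = q / Nat.gcd q m := by
    rw [hrange, Nat.card_zmultiples, ZMod.addOrderOf_coe m hq.ne']
  have hcard : Nat.card (ZMod q) = q := Nat.card_zmod q
  have hgd : Nat.gcd q m ∣ q := Nat.gcd_dvd_left q m
  have key : (q / Nat.gcd q m) * Nat.card f.ker = q := by
    rw [← h3, ← h2, h1, hcard]
  have hg0 : 0 < Nat.gcd q m ∨ Nat.gcd q m = 0 := (Nat.eq_zero_or_pos _).symm.imp id id
  have : Nat.card f.ker = Nat.gcd q m := by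
    have hgpos : 0 < Nat.gcd q m := Nat.gcd_pos_of_pos_left m hq
    have hqd : 0 < q / Nat.gcd q m := Nat.div_pos (Nat.le_of_dvd hq hgd) hgpos
    have h4 : q / (q / Nat.gcd q m) = Nat.card f.ker :=
      Nat.div_eq_of_eq_mul_right hqd key.symm
    rw [← h4, Nat.div_div_self hgd hq.ne']
  rw [Nat.gcd_comm, ← this]
  exact Nat.card_congr (Equiv.subtypeEquivRight (fun y => (hker y).symm)).symm


lemma fixCard_eq {ℓ : ℕ} (M S T : Matrix (Fin ℓ) (Fin ℓ) ℤ)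
    (hS : IsUnit S.det) (hT : IsUnit T.det) (d : Fin ℓ → ℤ)
    (h : S * (M - 1) * T = Matrix.diagonal d) (q : ℕ) (hq : 0 < q) :
    fixCard M q = ∏ i : Fin ℓ, Int.gcd (d i) (q : ℤ) := by
  classical
  set f := Int.castRingHom (ZMod q) with hfdef
  set F : Matrix (Fin ℓ) (Fin ℓ) ℤ →+* Matrix (Fin ℓ) (Fin ℓ) (ZMod q) := f.mapMatrix with hFdef
  set A := M - 1 with hA
  set D : Matrix (Fin ℓ) (Fin ℓ) (ZMod q) := Matrix.diagonal (fun i => ((d i : ℤ) : ZMod q)) with hD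
  have hmapD : F S * F A * F T = D := by
    rw [← _root_.map_mul, ← _root_.map_mul, h]
    simp [hFdef, hD, Matrix.diagonal_map]
  have hS' : IsUnit (F S) := by
    rw [Matrix.isUnit_iff_isUnit_det, hFdef, ← RingHom.map_det]
    exact hS.map f
  have hT' : IsUnit (F T) := by
    rw [Matrix.isUnit_iff_isUnit_det, hFdef, ← RingHom.map_det]
    exact hT.map f
  obtain ⟨u, hu⟩ := hS'
  obtain ⟨v, hv⟩ := hT'
  -- step 1: condition rewrite
  have e1 : {x : Fin ℓ → ZMod q // Matrix.vecMul x (M.map (Int.cast : ℤ → ZMod q)) = x}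
      ≃ {x : Fin ℓ → ZMod q // Matrix.vecMul x (F A) = 0} := by
    apply Equiv.subtypeEquivRight
    intro x
    have : F A = M.map (Int.cast : ℤ → ZMod q) - 1 := by
      simp [hFdef, hA, map_sub, hfdef, Int.coe_castRingHom]
    rw [this, Matrix.vecMul_sub, sub_eq_zero, Matrix.vecMul_one]
  -- step 2: change of variables
  have e2 : {x : Fin ℓ → ZMod q // Matrix.vecMul x (F A) = 0}
      ≃ {y : Fin ℓ → ZMod q // Matrix.vecMul y D = 0} := by
    refine ⟨fun x => ⟨Matrix.vecMul x.1 ↑u⁻¹, ?_⟩, fun y => ⟨Matrix.vecMul y.1 ↑u, ?_⟩, ?_, ?_⟩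
    · rw [Matrix.vecMul_vecMul, ← hmapD, ← hu, ← mul_assoc, ← mul_assoc, u.inv_mul, one_mul,
        ← Matrix.vecMul_vecMul, x.2, Matrix.zero_vecMul]
    · have hAv : F A = (↑u⁻¹ : Matrix (Fin ℓ) (Fin ℓ) (ZMod q)) * D * (↑v⁻¹ : Matrix (Fin ℓ) (Fin ℓ) (ZMod q)) := by
        rw [← hmapD, ← hu, ← hv]
        simp [mul_assoc, Units.inv_mul_cancel_left]
      rw [hAv, Matrix.vecMul_vecMul, ← mul_assoc, ← mul_assoc, u.mul_inv,
        one_mul, ← Matrix.vecMul_vecMul, y.2, Matrix.zero_vecMul]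
    · rintro ⟨x, hx⟩
      exact Subtype.ext (by simp [Matrix.vecMul_vecMul, Units.inv_mul, Matrix.vecMul_one])
    · rintro ⟨y, hy⟩
      exact Subtype.ext (by simp [Matrix.vecMul_vecMul, Units.mul_inv, Matrix.vecMul_one])
  -- step 3: diagonal condition
  have e3 : {y : Fin ℓ → ZMod q // Matrix.vecMul y D = 0}
      ≃ ∀ i : Fin ℓ, {z : ZMod q // z * ((d i : ℤ) : ZMod q) = 0} := by
    refine Equiv.trans (Equiv.subtypeEquivRight ?_) (Equiv.subtypePiEquivPi)
    intro y
    rw [funext_iff]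
    apply forall_congr'
    intro i
    rw [hD, Matrix.vecMul_diagonal]
    rfl
  have hcard : fixCard M q = ∏ i : Fin ℓ, Nat.card {z : ZMod q // z * ((d i : ℤ) : ZMod q) = 0} := by
    rw [fixCard, Nat.card_congr (e1.trans (e2.trans e3)), Nat.card_pi]
  rw [hcard]
  apply Finset.prod_congr rfl
  intro i _
  have habs : ∀ z : ZMod q, z * ((d i : ℤ) : ZMod q) = 0 ↔ z * (((d i).natAbs : ℕ) : ZMod q) = 0 := by
    intro z
    rcases Int.natAbs_eq (d i) with h1 | h1
    · conv_lhs => rw [h1]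
      rw [Int.cast_natCast]
    · conv_lhs => rw [h1]
      rw [Int.cast_neg, Int.cast_natCast, mul_neg, neg_eq_zero]
  rw [Nat.card_congr (Equiv.subtypeEquivRight habs), card_ann q hq]
  simp [Int.gcd, Int.natAbs_natCast]

/-- For a finite group `Γ` acting on `ℤ^ℓ` via `ρ` and an
irreducible character `χ` of `Γ` (character of a simple finite-dimensional
complex representation `V`), the multiplicity
`m(χ; q) = (1/#Γ) Σ_γ χ(γ) conj(χ_{X_q}(γ))` of `χ` in the permutation
character of `Γ` on `(ℤ/qℤ)^ℓ` equals
`(1/#Γ) Σ_γ χ(γ) (∏_j gcd(e_{γ,j}, q)) q^(ℓ - r(γ))`; in particular it is a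
quasi-polynomial in `q`. The rank `r γ` and elementary divisors `d γ j`
(`j < r γ`) of `R_γ - I` are encoded by Smith normal forms. -/
theorem stmt6 (ℓ : ℕ) (Γ : Type) [Group Γ] [Fintype Γ]
    (ρ : Γ →* Matrix.GeneralLinearGroup (Fin ℓ) ℤ) (hρ : Function.Injective ρ)
    (V : FDRep ℂ Γ) (hV : CategoryTheory.Simple V)
    (r : Γ → ℕ) (hr : ∀ γ, r γ ≤ ℓ)
    (S T : Γ → Matrix (Fin ℓ) (Fin ℓ) ℤ)
    (hS : ∀ γ, IsUnit (S γ).det) (hT : ∀ γ, IsUnit (T γ).det)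
    (d : Γ → Fin ℓ → ℤ)
    (hSNF : ∀ γ, S γ * ((ρ γ : Matrix (Fin ℓ) (Fin ℓ) ℤ) - 1) * T γ = Matrix.diagonal (d γ))
    (hpos : ∀ γ, ∀ i : Fin ℓ, (i : ℕ) < r γ → 0 < d γ i)
    (hzero : ∀ γ, ∀ i : Fin ℓ, r γ ≤ (i : ℕ) → d γ i = 0)
    (hdvd : ∀ γ, ∀ i j : Fin ℓ, i ≤ j → (j : ℕ) < r γ → d γ i ∣ d γ j) :
    (∀ q : ℕ, 0 < q →
      (Fintype.card Γ : ℂ)⁻¹ * ∑ γ : Γ, V.character γ *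
          (starRingEnd ℂ) ((fixCard (ρ γ : Matrix (Fin ℓ) (Fin ℓ) ℤ) q : ℂ))
        = (Fintype.card Γ : ℂ)⁻¹ * ∑ γ : Γ, V.character γ *
            ((∏ i : Fin ℓ, if (i : ℕ) < r γ then (Int.gcd (d γ i) (q : ℤ) : ℂ) else 1)
              * (q : ℂ) ^ (ℓ - r γ)))
    ∧ ∃ n : ℕ, 0 < n ∧ ∃ g : ℕ → Polynomial ℂ,
        ∀ q : ℕ, 0 < q →
          (Fintype.card Γ : ℂ)⁻¹ * ∑ γ : Γ, V.character γ *
              (starRingEnd ℂ) ((fixCard (ρ γ : Matrix (Fin ℓ) (Fin ℓ) ℤ) q : ℂ))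
            = (g (q % n)).eval (q : ℂ) := by
  classical
  have hfix : ∀ (γ : Γ) (q : ℕ), 0 < q →
      ((fixCard ((ρ γ : Matrix (Fin ℓ) (Fin ℓ) ℤ)) q : ℕ) : ℂ)
        = (∏ i : Fin ℓ, if (i : ℕ) < r γ then (Int.gcd (d γ i) (q : ℤ) : ℂ) else 1)
          * (q : ℂ) ^ (ℓ - r γ) := by
    intro γ q hq
    rw [fixCard_eq _ (S γ) (T γ) (hS γ) (hT γ) (d γ) (hSNF γ) q hq]
    rw [Nat.cast_prod]
    have hsplit : ∀ i : Fin ℓ, i ∈ Finset.univ → ((Int.gcd (d γ i) (q : ℤ) : ℕ) : ℂ)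
        = (if (i : ℕ) < r γ then ((Int.gcd (d γ i) (q : ℤ) : ℕ) : ℂ) else 1)
          * (if (i : ℕ) < r γ then 1 else (q : ℂ)) := by
      intro i _
      by_cases hi : (i : ℕ) < r γ
      · simp [hi]
      · simp only [hi, if_false, one_mul]
        rw [hzero γ i (le_of_not_gt hi)]
        simp [Int.gcd]
    rw [Finset.prod_congr rfl hsplit, Finset.prod_mul_distrib]
    congr 1
    rw [Finset.prod_ite, Finset.prod_const_one, one_mul, Finset.prod_const,
      card_filter_not_lt ℓ (r γ) (hr γ)]
  constructor
  · intro q hq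
    congr 1
    apply Finset.sum_congr rfl
    intro γ _
    rw [map_natCast (starRingEnd ℂ), hfix γ q hq]
  · set n := ∏ γ : Γ, ∏ i : Fin ℓ, max 1 (d γ i).natAbs with hn
    have hnpos : 0 < n := Finset.prod_pos (fun γ _ => Finset.prod_pos
      (fun i _ => lt_of_lt_of_le one_pos (le_max_left _ _)))
    have hdn : ∀ γ (i : Fin ℓ), (i : ℕ) < r γ → (d γ i).natAbs ∣ n := by
      intro γ i hi
      have h1 : max 1 (d γ i).natAbs = (d γ i).natAbs :=
        max_eq_right (Int.one_le_abs (by exact_mod_cast (hpos γ i hi).ne') |>.trans (le_of_eq rfl) |> fun _ => Nat.one_le_iff_ne_zero.mpr (Int.natAbs_ne_zero.mpr (hpos γ i hi).ne'))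
      calc (d γ i).natAbs = max 1 (d γ i).natAbs := h1.symm
        _ ∣ ∏ j : Fin ℓ, max 1 (d γ j).natAbs := Finset.dvd_prod_of_mem _ (Finset.mem_univ i)
        _ ∣ n := Finset.dvd_prod_of_mem _ (Finset.mem_univ γ)
    refine ⟨n, hnpos, fun s => ∑ γ : Γ, Polynomial.C ((Fintype.card Γ : ℂ)⁻¹ * V.character γ
        * ∏ i : Fin ℓ, if (i : ℕ) < r γ then (Int.gcd (d γ i) (s : ℤ) : ℂ) else 1)
        * Polynomial.X ^ (ℓ - r γ), ?_⟩
    intro q hq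
    have hg : ∀ γ (i : Fin ℓ),
        (if (i : ℕ) < r γ then (Int.gcd (d γ i) ((q % n : ℕ) : ℤ) : ℂ) else 1)
          = (if (i : ℕ) < r γ then (Int.gcd (d γ i) (q : ℤ) : ℂ) else 1) := by
      intro γ i
      by_cases hi : (i : ℕ) < r γ
      · simp only [hi, if_true]
        have : Int.gcd (d γ i) ((q % n : ℕ) : ℤ) = Int.gcd (d γ i) (q : ℤ) := by
          show Nat.gcd _ _ = Nat.gcd _ _
          rw [Int.natAbs_natCast, Int.natAbs_natCast]
          exact gcd_mod_invariant _ n q (hdn γ i hi)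
        rw [this]
      · simp [hi]
    rw [Polynomial.eval_finset_sum, Finset.mul_sum]
    apply Finset.sum_congr rfl
    intro γ _
    rw [map_natCast (starRingEnd ℂ), hfix γ q hq, Polynomial.eval_mul, Polynomial.eval_C,
      Polynomial.eval_pow, Polynomial.eval_X]
    rw [Finset.prod_congr rfl (fun i _ => hg γ i)]
    ring
end

section
/- Let Γ be a finite group acting on L ≅ ℤ^ℓ via an injective ρ : Γ → GL(L). Then for each irreducible character χ_i of Γ, the quasi-polynomial m(χ_i; q) has degree ℓ with leading coefficient χ_i(1)/#Γ; that is, m(χ_i; q) = (χ_i(1)/#Γ) q^ℓ + (lower order terms in q). -/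
open Matrix Polynomial CategoryTheory

theorem ZMod.card_zsmul_eq_zero (q : ℕ) [NeZero q] (a : ℤ) :
    Nat.card {y : ZMod q // a • y = 0} = Nat.gcd a.natAbs q := by
  have h := IsAddCyclic.card_nsmulAddMonoidHom_ker (ZMod q) a.natAbs
  rw [Nat.card_zmod, Nat.gcd_comm] at h
  rw [← h]
  refine Nat.card_congr (Equiv.subtypeEquivRight fun y => ?_)
  rw [AddMonoidHom.mem_ker, nsmulAddMonoidHom_apply, natAbs_nsmul_eq_zero]

theorem Nat.card_subtype_forall_comp_embedding {ι κ A : Type*} [Fintype ι] [Fintype κ]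
    [Finite A] (f : κ ↪ ι) (P : κ → A → Prop) :
    Nat.card {c : ι → A // ∀ i, P i (c (f i))} =
      Nat.card A ^ (Fintype.card ι - Fintype.card κ) * ∏ i, Nat.card {y // P i y} := by
  classical
  let S : ι → Set A := fun j => {y | ∀ i, f i = j → P i y}
  let e : {c : ι → A // ∀ i, P i (c (f i))} ≃ ∀ j, S j :=
    { toFun := fun c j => ⟨c.1 j, fun i h => h ▸ c.2 i⟩
      invFun := fun s => ⟨fun j => s j, fun i => (s (f i)).2 i rfl⟩ }
  have card_S_image (i : κ) : Nat.card (S (f i)) = Nat.card {y // P i y} :=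
    Nat.card_congr <| Equiv.subtypeEquivRight fun y =>
      ⟨fun h => h i rfl, fun h i' hi' => f.injective hi' ▸ h⟩
  have card_S_compl (j : ι) (hj : j ∈ (Finset.univ.map f)ᶜ) : Nat.card (S j) = Nat.card A := by
    have hS : S j = Set.univ := Set.eq_univ_of_forall fun y i hi => by simp [← hi] at hj
    rw [hS, Nat.card_univ]
  rw [Nat.card_congr e, Nat.card_pi, ← Finset.prod_mul_prod_compl (Finset.univ.map f),
    Finset.prod_map, Finset.prod_congr rfl fun j hj => card_S_compl j hj, Finset.prod_const,
    Finset.card_compl, Finset.card_map, Finset.card_univ, mul_comm]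
  exact congrArg _ (Finset.prod_congr rfl fun i _ => card_S_image i)

theorem Submodule.le_ker_iff_basis {R M P ι : Type*} [Semiring R] [AddCommMonoid M]
    [Module R M] [AddCommMonoid P] [Module R P] {N : Submodule R M} (b : Module.Basis ι R N)
    (φ : M →ₗ[R] P) :
    N ≤ LinearMap.ker φ ↔ ∀ i, φ (b i) = 0 := by
  refine ⟨fun h i => h (b i).2, fun h x hx => ?_⟩
  have hφ : φ ∘ₗ N.subtype = 0 := b.ext h
  exact LinearMap.congr_fun hφ ⟨x, hx⟩

namespace Module.Basis.SmithNormalForm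

theorem a_ne_zero {R M ι : Type*} [CommRing R] [Nontrivial R] [AddCommGroup M] [Module R M]
    {N : Submodule R M} {k : ℕ} (snf : Basis.SmithNormalForm N ι k) (i : Fin k) :
    snf.a i ≠ 0 := by
  intro h
  apply snf.bN.ne_zero i
  rw [← Submodule.coe_eq_zero, snf.snf, h, zero_smul]

section

variable {M ι : Type*} [AddCommGroup M] [Fintype ι] {N : Submodule ℤ M} {k : ℕ}

theorem card_linearMap_zmod_le_ker (snf : Basis.SmithNormalForm N ι k) (q : ℕ) [NeZero q] :
    Nat.card {φ : M →ₗ[ℤ] ZMod q // N ≤ LinearMap.ker φ} =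
      q ^ (Fintype.card ι - k) * ∏ i, Nat.gcd (snf.a i).natAbs q := by
  -- `φ` is determined by `c j = φ (bM j)`, and it kills `N = span {a i • bM (f i)}` iff
  -- `a i • c (f i) = 0` for all `i`.
  let e : {φ : M →ₗ[ℤ] ZMod q // N ≤ LinearMap.ker φ} ≃
      {c : ι → ZMod q // ∀ i, snf.a i • c (snf.f i) = 0} :=
    (snf.bM.constr ℤ).symm.toEquiv.subtypeEquiv fun φ => by
      simp only [Submodule.le_ker_iff_basis snf.bN, snf.snf, map_zsmul, LinearEquiv.coe_toEquiv,
        constr_symm_apply]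
  rw [Nat.card_congr e,
    Nat.card_subtype_forall_comp_embedding snf.f (fun i y => snf.a i • y = 0), Nat.card_zmod,
    Fintype.card_fin]
  simp_rw [ZMod.card_zsmul_eq_zero]

end

end Module.Basis.SmithNormalForm

theorem Matrix.card_vecMul_map_intCast_eq_zero {ι κ : Type*} [Fintype ι] [Fintype κ]
    (A : Matrix ι κ ℤ) (q : ℕ) :
    Nat.card {x : ι → ZMod q // vecMul x (A.map Int.cast) = 0} =
      Nat.card {φ : (ι → ℤ) →ₗ[ℤ] ZMod q //
        LinearMap.range A.mulVecLin ≤ LinearMap.ker φ} := by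
  classical
  -- `x` is the functional `v ↦ ∑ i, v i • x i`; `vecMul x A = 0` says it kills each column of `A`.
  refine Nat.card_congr (((Pi.basisFun ℤ ι).constr ℤ).toEquiv.subtypeEquiv fun x => ?_)
  rw [range_mulVecLin, Submodule.span_le, Set.range_subset_iff, funext_iff]
  refine forall_congr' fun j => ?_
  simp [Module.Basis.constr_apply_fintype, vecMul, dotProduct, mul_comm]

theorem Matrix.exists_card_vecMul_map_intCast_eq_zero {ι κ : Type*} [Fintype ι] [Fintype κ]
    (A : Matrix ι κ ℤ) :
    ∃ k ≤ Fintype.card ι, (k = 0 ↔ A = 0) ∧ ∃ a : Fin k → ℤ, (∀ i, a i ≠ 0) ∧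
      ∀ (q : ℕ) [NeZero q], Nat.card {x : ι → ZMod q // vecMul x (A.map Int.cast) = 0} =
        q ^ (Fintype.card ι - k) * ∏ i, Nat.gcd (a i).natAbs q := by
  classical
  obtain ⟨k, snf⟩ := (LinearMap.range A.mulVecLin).smithNormalForm (Pi.basisFun ℤ ι)
  refine ⟨k, by simpa using Fintype.card_le_of_embedding snf.f, ?_, snf.a, snf.a_ne_zero,
    fun q _ => by rw [card_vecMul_map_intCast_eq_zero, snf.card_linearMap_zmod_le_ker]⟩
  have : Module.Finite ℤ (LinearMap.range A.mulVecLin) := Module.Finite.of_basis snf.bN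
  rw [← Fintype.card_fin k, ← Module.finrank_eq_card_basis snf.bN, Submodule.finrank_eq_zero,
    LinearMap.range_eq_bot, ← toLin'_apply', LinearEquiv.map_eq_zero_iff]

theorem FDRep.character_one_ne_zero {k G : Type*} [Field k] [CharZero k] [Monoid G]
    (V : FDRep k G) [Simple V] :
    V.character 1 ≠ 0 := by
  rw [FDRep.char_one, Nat.cast_ne_zero, Ne, Module.finrank_zero_iff]
  intro h
  apply id_nonzero V
  ext x
  exact Subsingleton.elim _ _

theorem Polynomial.coeff_sum_C_mul_X_pow_of_lt {R ι : Type*} [Semiring R] [Fintype ι]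
    (w : ι → R) (d : ι → ℕ) {i₀ : ι} (hd : ∀ i ≠ i₀, d i < d i₀) :
    (∑ i, C (w i) * X ^ d i).coeff (d i₀) = w i₀ := by
  rw [finsetSum_coeff, Finset.sum_eq_single i₀ (fun i _ hi => by
    rw [coeff_C_mul_X_pow, if_neg (hd i hi).ne']) (by simp), coeff_C_mul_X_pow, if_pos rfl]

theorem Polynomial.natDegree_sum_C_mul_X_pow_of_lt {R ι : Type*} [Semiring R] [Fintype ι]
    (w : ι → R) (d : ι → ℕ) {i₀ : ι} (hd : ∀ i ≠ i₀, d i < d i₀)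
    (hw : w i₀ ≠ 0) :
    (∑ i, C (w i) * X ^ d i).natDegree = d i₀ := by
  refine natDegree_eq_of_le_of_coeff_ne_zero (natDegree_sum_le_of_forall_le _ _ fun i _ =>
    (natDegree_C_mul_X_pow_le _ _).trans ?_) (by rwa [coeff_sum_C_mul_X_pow_of_lt w d hd])
  by_cases hi : i = i₀
  · rw [hi]
  · exact (hd i hi).le

theorem Nat.gcd_mod_of_dvd {a n : ℕ} (q : ℕ) (h : a ∣ n) :
    Nat.gcd a (q % n) = Nat.gcd a q := by
  rw [Nat.gcd_rec, Nat.mod_mod_of_dvd q h, ← Nat.gcd_rec]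

theorem fixCard_eq_card_vecMul_sub_one_eq_zero {ℓ : ℕ} (M : Matrix (Fin ℓ) (Fin ℓ) ℤ)
    (q : ℕ) :
    fixCard M q = Nat.card {x : Fin ℓ → ZMod q // vecMul x ((M - 1).map Int.cast) = 0} :=
  Nat.card_congr <| Equiv.subtypeEquivRight fun x => by
    rw [Matrix.map_sub _ Int.cast_sub, Matrix.map_one _ Int.cast_zero Int.cast_one, vecMul_sub,
      vecMul_one, sub_eq_zero]

theorem exists_fixCard_eq {ℓ : ℕ} (M : Matrix (Fin ℓ) (Fin ℓ) ℤ) :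
    ∃ k ≤ ℓ, (k = 0 ↔ M = 1) ∧ ∃ a : Fin k → ℤ, (∀ i, a i ≠ 0) ∧
      ∀ (q : ℕ) [NeZero q], fixCard M q = q ^ (ℓ - k) * ∏ i, Nat.gcd (a i).natAbs q := by
  obtain ⟨k, hk, hk0, a, ha, hcard⟩ := (M - 1).exists_card_vecMul_map_intCast_eq_zero
  simp only [Fintype.card_fin, sub_eq_zero] at hk hk0 hcard
  exact ⟨k, hk, hk0, a, ha, fun q _ => by rw [fixCard_eq_card_vecMul_sub_one_eq_zero, hcard]⟩

theorem exists_fixCard_eq_pow_mul_periodic {ι : Type*} [Fintype ι] {ℓ : ℕ}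
    (M : ι → Matrix (Fin ℓ) (Fin ℓ) ℤ) :
    ∃ n > 0, ∃ (d : ι → ℕ) (c : ι → ℕ → ℕ),
      (∀ i, M i = 1 → d i = ℓ ∧ ∀ b, c i b = 1) ∧
      (∀ i, M i ≠ 1 → d i < ℓ) ∧
        ∀ i (q : ℕ) [NeZero q], fixCard (M i) q = q ^ d i * c i (q % n) := by
  choose k hkℓ hk a ha hfix using fun i => exists_fixCard_eq (M i)
  refine ⟨∏ i, ∏ j, (a i j).natAbs,
    Finset.prod_pos fun i _ => Finset.prod_pos fun j _ => Int.natAbs_pos.2 (ha i j),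
    fun i => ℓ - k i, fun i b => ∏ j, Nat.gcd (a i j).natAbs b, fun i hi => ?_, fun i hi => ?_,
    fun i q _ => ?_⟩
  · have hk0 := (hk i).2 hi
    have : IsEmpty (Fin (k i)) := by rw [hk0]; infer_instance
    exact ⟨show ℓ - k i = ℓ by rw [hk0, Nat.sub_zero], fun b => Finset.prod_of_isEmpty _⟩
  · show ℓ - k i < ℓ
    have := (hk i).not.2 hi
    have := hkℓ i
    omega
  · rw [hfix]
    refine congrArg _ (Finset.prod_congr rfl fun j _ => (Nat.gcd_mod_of_dvd q ?_).symm)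
    exact (Finset.dvd_prod_of_mem _ (Finset.mem_univ j)).trans
      (Finset.dvd_prod_of_mem (fun i => ∏ j, (a i j).natAbs) (Finset.mem_univ i))

/-- For a finite group `Γ` acting on `ℤ^ℓ` via an injective
`ρ : Γ → GL_ℓ(ℤ)` and each irreducible character `χ_i` of `Γ`, the
quasi-polynomial `m(χ_i; q)` (multiplicity of `χ_i` in the permutation
character on `(ℤ/qℤ)^ℓ`) has degree `ℓ` with leading coefficient
`χ_i(1)/#Γ`: all its constituents have degree `ℓ` and leading coefficient
`χ_i(1)/#Γ`. -/
theorem stmt8 (ℓ : ℕ) (Γ : Type) [Group Γ] [Fintype Γ]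
    (ρ : Γ →* Matrix.GeneralLinearGroup (Fin ℓ) ℤ) (hρ : Function.Injective ρ)
    (V : FDRep ℂ Γ) (hV : CategoryTheory.Simple V) :
    ∃ n : ℕ, 0 < n ∧ ∃ g : ℕ → Polynomial ℂ,
      (∀ q : ℕ, 0 < q →
        (Fintype.card Γ : ℂ)⁻¹ * ∑ γ : Γ, V.character γ *
            (starRingEnd ℂ) ((fixCard (ρ γ : Matrix (Fin ℓ) (Fin ℓ) ℤ) q : ℂ))
          = (g (q % n)).eval (q : ℂ))
      ∧ ∀ a : ℕ, a < n →
          (g a).natDegree = ℓ ∧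
          (g a).coeff ℓ = V.character 1 / (Fintype.card Γ : ℂ) := by
  have := hV
  obtain ⟨n, hn, d, c, hone, hlt, hfix⟩ :=
    exists_fixCard_eq_pow_mul_periodic fun γ : Γ => (ρ γ : Matrix (Fin ℓ) (Fin ℓ) ℤ)
  obtain ⟨hd_one, hc_one⟩ := hone 1 (by simp)
  have hd_lt (γ : Γ) (hγ : γ ≠ 1) : d γ < d 1 :=
    hd_one ▸ hlt γ fun h => hγ (hρ ((Units.ext h).trans (map_one ρ).symm))
  let w (b : ℕ) (γ : Γ) : ℂ := (Fintype.card Γ : ℂ)⁻¹ * V.character γ * c γ b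
  refine ⟨n, hn, fun b => ∑ γ, C (w b γ) * X ^ d γ, fun q hq => ?_, fun b _ => ?_⟩
  · have : NeZero q := ⟨hq.ne'⟩
    simp only [eval_finsetSum, eval_mul, eval_C, eval_pow, eval_X, Finset.mul_sum, hfix,
      map_natCast, w]
    exact Finset.sum_congr rfl fun γ _ => by push_cast; ring
  · have hw : w b 1 = V.character 1 / Fintype.card Γ := by simp [w, hc_one, div_eq_inv_mul]
    have hw0 : w b 1 ≠ 0 := hw ▸ div_ne_zero V.character_one_ne_zero (by simp)
    rw [← hd_one, ← hw]
    exact ⟨natDegree_sum_C_mul_X_pow_of_lt (w b) d hd_lt hw0,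
      coeff_sum_C_mul_X_pow_of_lt (w b) d hd_lt⟩
end

section
/- Let Γ be a finite group acting on L ≅ ℤ^ℓ via injective ρ : Γ → GL(L). The function F : ℤ_{>0} → R(Γ), q ↦ χ_{L/qL} (the class of the permutation representation of Γ on L/qL in the representation ring) is a quasi-polynomial of degree ℓ whose leading coefficient is (1/#Γ) · χ_reg, where χ_reg is the regular character of Γ. -/
open Matrix Polynomial

theorem ZMod.range_mulLeft (q m : ℕ) :
    (AddMonoidHom.mulLeft (m : ZMod q)).range = AddSubgroup.zmultiples (m : ZMod q) := by
  ext c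
  simp only [AddMonoidHom.mem_range, AddMonoidHom.coe_mulLeft, AddSubgroup.mem_zmultiples_iff,
    zsmul_eq_mul]
  constructor
  · rintro ⟨b, rfl⟩
    obtain ⟨k, rfl⟩ := ZMod.intCast_surjective b
    exact ⟨k, mul_comm _ _⟩
  · rintro ⟨k, rfl⟩
    exact ⟨k, mul_comm _ _⟩

theorem ZMod.card_nsmul_eq_zero (q m : ℕ) [NeZero q] :
    Nat.card {c : ZMod q // m • c = 0} = m.gcd q := by
  let f := AddMonoidHom.mulLeft (m : ZMod q)
  have hker : Nat.card {c : ZMod q // m • c = 0} = Nat.card f.ker :=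
    Nat.card_congr (Equiv.subtypeEquivRight fun c => by simp [f, nsmul_eq_mul])
  have hq : Nat.card f.ker * (q / q.gcd m) = q := by
    rw [← ZMod.addOrderOf_coe m (NeZero.ne q), ← Nat.card_zmultiples, ← ZMod.range_mulLeft,
      ← AddSubgroup.index_ker, AddSubgroup.card_mul_index, Nat.card_zmod]
  have hdvd : q.gcd m ∣ q := Nat.gcd_dvd_left q m
  rw [hker, Nat.eq_div_of_mul_eq_left _ hq, Nat.div_div_self hdvd (NeZero.ne q), Nat.gcd_comm]
  exact (Nat.div_pos (Nat.le_of_dvd (NeZero.pos q) hdvd)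
    (Nat.gcd_pos_of_pos_left m (NeZero.pos q))).ne'

theorem ZMod.card_addMonoidHom (m q : ℕ) [NeZero q] :
    Nat.card (ZMod m →+ ZMod q) = m.gcd q := by
  rw [← ZMod.card_nsmul_eq_zero, ← Nat.card_congr (ZMod.lift m)]
  refine Nat.card_congr (Equiv.subtypeEquiv (zmultiplesHom (ZMod q)).symm fun f => ?_)
  change f m = 0 ↔ m • f 1 = 0
  rw [← map_nsmul, nsmul_one]

theorem Prod.card_addMonoidHom {M N P : Type*} [AddCommGroup M] [AddCommGroup N] [AddCommGroup P] :
    Nat.card (M × N →+ P) = Nat.card (M →+ P) * Nat.card (N →+ P) := by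
  rw [← Nat.card_prod]
  exact Nat.card_congr ((addMonoidHomLequivInt ℤ).toEquiv.trans
    ((LinearMap.coprodEquiv ℤ).symm.toEquiv.trans
      ((addMonoidHomLequivInt ℤ).toEquiv.prodCongr (addMonoidHomLequivInt ℤ).toEquiv).symm))

theorem Finsupp.card_addMonoidHom (ι P : Type*) [Fintype ι] [AddCommGroup P] :
    Nat.card ((ι →₀ ℤ) →+ P) = Nat.card P ^ Fintype.card ι := by
  rw [← Nat.card_congr Finsupp.liftAddHom.toEquiv, Nat.card_pi,
    ← Nat.card_congr (zmultiplesHom P), Finset.prod_const, Finset.card_univ]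

theorem DirectSum.card_addMonoidHom {ι : Type*} [Fintype ι] [DecidableEq ι] (β : ι → Type*)
    [∀ i, AddCommGroup (β i)] (P : Type*) [AddCommGroup P] :
    Nat.card (DirectSum ι β →+ P) = ∏ i, Nat.card (β i →+ P) := by
  rw [← Nat.card_pi]
  exact Nat.card_congr DFinsupp.liftAddHom.toEquiv.symm

def LinearMap.rangeQuotientHomEquiv {R M N P : Type*} [Ring R] [AddCommGroup M] [AddCommGroup N]
    [AddCommGroup P] [Module R M] [Module R N] [Module R P] (φ : M →ₗ[R] N) :
    (N ⧸ LinearMap.range φ →ₗ[R] P) ≃ {f : N →ₗ[R] P // f ∘ₗ φ = 0} where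
  toFun F := ⟨F ∘ₗ (LinearMap.range φ).mkQ, by
    ext
    simp [(Submodule.Quotient.mk_eq_zero _).2 (LinearMap.mem_range_self φ _)]⟩
  invFun f := (LinearMap.range φ).liftQ f (LinearMap.range_le_ker_iff.2 f.2)
  left_inv F := Submodule.linearMap_qext _ rfl
  right_inv f := Subtype.ext (Submodule.liftQ_mkQ _ _ _)

theorem Matrix.constr_comp_mulVecLin {m n R : Type*} [Fintype m] [Fintype n] [DecidableEq m]
    [DecidableEq n] [CommRing R] (A : Matrix m n ℤ) (x : m → R) :
    (Pi.basisFun ℤ m).constr ℤ x ∘ₗ A.mulVecLin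
      = (Pi.basisFun ℤ n).constr ℤ (x ᵥ* A.map (Int.cast : ℤ → R)) := by
  refine (Pi.basisFun ℤ n).ext fun j => ?_
  simp [Module.Basis.constr_apply_fintype, vecMul, dotProduct, zsmul_eq_mul, mul_comm,
    Pi.single_apply]

theorem Matrix.card_vecMul_eq_zero_eq_card_addMonoidHom {m n R : Type*} [Fintype m] [Fintype n]
    [DecidableEq m] [DecidableEq n] [CommRing R] (A : Matrix m n ℤ) :
    Nat.card {x : m → R // x ᵥ* A.map (Int.cast : ℤ → R) = 0}
      = Nat.card ((m → ℤ) ⧸ LinearMap.range A.mulVecLin →+ R) := by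
  calc Nat.card {x : m → R // x ᵥ* A.map (Int.cast : ℤ → R) = 0}
      = Nat.card {f : (m → ℤ) →ₗ[ℤ] R // f ∘ₗ A.mulVecLin = 0} := by
        refine Nat.card_congr <|
          Equiv.subtypeEquiv ((Pi.basisFun ℤ m).constr ℤ).toEquiv fun x => ?_
        simp [constr_comp_mulVecLin]
    _ = Nat.card ((m → ℤ) ⧸ LinearMap.range A.mulVecLin →ₗ[ℤ] R) :=
        Nat.card_congr (LinearMap.rangeQuotientHomEquiv _).symm
    _ = Nat.card ((m → ℤ) ⧸ LinearMap.range A.mulVecLin →+ R) :=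
        Nat.card_congr (addMonoidHomLequivInt ℤ).toEquiv.symm

theorem AddCommGroup.exists_card_addMonoidHom_zmod (G : Type*) [AddCommGroup G]
    [Module.Finite ℤ G] :
    ∃ (d : ℕ) (ι : Type) (_ : Fintype ι) (k : ι → ℕ), (∀ i, 0 < k i) ∧
      ∀ q [NeZero q], Nat.card (G →+ ZMod q) = (∏ i, (k i).gcd q) * q ^ d := by
  classical
  have := Module.Finite.iff_addGroup_fg.mp ‹_›
  obtain ⟨d, ι, _, p, hp, e, ⟨F⟩⟩ := AddCommGroup.equiv_free_prod_directSum_zmod G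
  refine ⟨d, ι, inferInstance, fun i => p i ^ e i, fun i => pow_pos (hp i).pos _, fun q _ => ?_⟩
  rw [Nat.card_congr F.addMonoidHomCongrLeftEquiv, Prod.card_addMonoidHom,
    Finsupp.card_addMonoidHom, DirectSum.card_addMonoidHom, Nat.card_zmod, Fintype.card_fin,
    mul_comm]
  simp only [ZMod.card_addMonoidHom]

def IsQuasiMonomial (f : ℕ → ℕ) (d : ℕ) : Prop :=
  ∃ N, 0 < N ∧ ∃ c : ℕ → ℕ, ∀ q, 0 < q → f q = c (q % N) * q ^ d

theorem isQuasiMonomial_of_eq_prod_gcd_mul_pow {ι : Type*} [Fintype ι] {f : ℕ → ℕ} {k : ι → ℕ}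
    {d : ℕ} (hk : ∀ i, 0 < k i) (hf : ∀ q, 0 < q → f q = (∏ i, (k i).gcd q) * q ^ d) :
    IsQuasiMonomial f d := by
  refine ⟨∏ i, k i, Finset.prod_pos fun i _ => hk i, fun a => ∏ i, (k i).gcd a, fun q hq => ?_⟩
  have hmod (i : ι) : (k i).gcd (q % ∏ j, k j) = (k i).gcd q := by
    rw [Nat.gcd_rec, Nat.gcd_rec (k i) q,
      Nat.mod_mod_of_dvd q (Finset.dvd_prod_of_mem k (Finset.mem_univ i))]
  simp only [hf q hq, hmod]

theorem Matrix.exists_card_vecMul_eq_zero_lt {m n : Type*} [Fintype m] [DecidableEq m]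
    (A : Matrix m n ℤ) (hA : A ≠ 0) :
    ∃ q, 1 < q ∧ Nat.card {x : m → ZMod q // x ᵥ* A.map (Int.cast : ℤ → ZMod q) = 0}
      < q ^ Fintype.card m := by
  obtain ⟨i, j, hij⟩ : ∃ i j, A i j ≠ 0 := by
    by_contra! h
    exact hA (Matrix.ext h)
  set q := (A i j).natAbs + 1
  have : NeZero q := ⟨by omega⟩
  have hsingle : ¬Pi.single i (1 : ZMod q) ᵥ* A.map Int.cast = 0 := fun h => hij <|
    Int.eq_zero_of_abs_lt_dvd
      ((ZMod.intCast_zmod_eq_zero_iff_dvd _ _).mp (by simpa using congrFun h j))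
      (by rw [Int.abs_eq_natAbs]; omega)
  refine ⟨q, by omega, ?_⟩
  calc _ < Nat.card (m → ZMod q) := Finite.card_subtype_lt hsingle
    _ = q ^ Fintype.card m := by rw [Nat.card_fun, Nat.card_zmod, Nat.card_eq_fintype_card]

theorem Matrix.exists_lt_isQuasiMonomial_card_vecMul_eq_zero {m n : Type*} [Fintype m]
    [Fintype n] [DecidableEq m] [DecidableEq n] (A : Matrix m n ℤ) (hA : A ≠ 0) :
    ∃ d < Fintype.card m, IsQuasiMonomial
      (fun q => Nat.card {x : m → ZMod q // x ᵥ* A.map (Int.cast : ℤ → ZMod q) = 0}) d := by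
  obtain ⟨d, ι, _, k, hk, hcard⟩ :=
    AddCommGroup.exists_card_addMonoidHom_zmod ((m → ℤ) ⧸ LinearMap.range A.mulVecLin)
  have hcount (q : ℕ) [NeZero q] :
      Nat.card {x : m → ZMod q // x ᵥ* A.map (Int.cast : ℤ → ZMod q) = 0}
        = (∏ i, (k i).gcd q) * q ^ d := by
    rw [card_vecMul_eq_zero_eq_card_addMonoidHom, hcard]
  refine ⟨d, ?_, isQuasiMonomial_of_eq_prod_gcd_mul_pow hk fun q hq => ?_⟩
  · obtain ⟨q, hq, hlt⟩ := A.exists_card_vecMul_eq_zero_lt hA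
    have : NeZero q := ⟨by omega⟩
    refine (Nat.pow_lt_pow_iff_right hq).mp (lt_of_le_of_lt ?_ hlt)
    rw [hcount]
    exact Nat.le_mul_of_pos_left _ (Finset.prod_pos fun i _ => Nat.gcd_pos_of_pos_left q (hk i))
  · have : NeZero q := ⟨hq.ne'⟩
    exact hcount q

theorem fixCard_eq_card_vecMul_sub_one {ℓ : ℕ} (M : Matrix (Fin ℓ) (Fin ℓ) ℤ) (q : ℕ) :
    fixCard M q
      = Nat.card {x : Fin ℓ → ZMod q // x ᵥ* (M - 1).map (Int.cast : ℤ → ZMod q) = 0} :=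
  Nat.card_congr <| Equiv.subtypeEquivRight fun x => by
    rw [Matrix.map_sub _ (Int.cast_sub · ·), Matrix.map_one _ Int.cast_zero Int.cast_one,
      vecMul_sub, vecMul_one, sub_eq_zero]

theorem fixCard_one (ℓ q : ℕ) : fixCard (1 : Matrix (Fin ℓ) (Fin ℓ) ℤ) q = q ^ ℓ := by
  rw [fixCard, Matrix.map_one _ Int.cast_zero Int.cast_one]
  simp only [vecMul_one]
  rw [Nat.card_congr (Equiv.subtypeUnivEquiv fun _ => trivial), Nat.card_fun, Nat.card_zmod,
    Nat.card_eq_fintype_card, Fintype.card_fin]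

theorem exists_lt_isQuasiMonomial_fixCard {ℓ : ℕ} (M : Matrix (Fin ℓ) (Fin ℓ) ℤ) (hM : M ≠ 1) :
    ∃ d < ℓ, IsQuasiMonomial (fixCard M) d := by
  obtain ⟨d, hd, hquasi⟩ :=
    (M - 1).exists_lt_isQuasiMonomial_card_vecMul_eq_zero (sub_ne_zero.mpr hM)
  rw [Fintype.card_fin] at hd
  exact ⟨d, hd, funext (fixCard_eq_card_vecMul_sub_one M) ▸ hquasi⟩

section PiPolynomial

variable {ι R : Type*} [Fintype ι] [DecidableEq ι] [CommSemiring R] (d : ι → ℕ) (v : ι → R)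

theorem Polynomial.eval_sum_monomial_single (x : R) :
    (∑ i, monomial (d i) (Pi.single i (v i))).eval (fun _ => x) = fun i => v i * x ^ d i := by
  ext j
  simp [eval_finsetSum, Finset.sum_apply, Pi.single_apply]

theorem Polynomial.coeff_sum_monomial_single (k : ℕ) :
    (∑ i, monomial (d i) (Pi.single i (v i))).coeff k = fun i => if d i = k then v i else 0 := by
  ext j
  simp only [finsetSum_coeff, coeff_monomial, Finset.sum_apply]
  rw [Finset.sum_eq_single j (fun i _ hij => by simp [ite_apply, hij.symm]) (by simp)]
  simp [ite_apply]

end PiPolynomial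

theorem exists_quasiPolynomial_of_isQuasiMonomial {ι R : Type*} [Fintype ι] [DecidableEq ι]
    [CommSemiring R] [Nontrivial R] (f : ι → ℕ → ℕ) (ℓ : ℕ) (i₀ : ι) (h₀ : ∀ q, f i₀ q = q ^ ℓ)
    (hf : ∀ i ≠ i₀, ∃ d < ℓ, IsQuasiMonomial (f i) d) :
    ∃ n, 0 < n ∧ ∃ g : ℕ → Polynomial (ι → R),
      (∀ q, 0 < q → (fun i => (f i q : R)) = (g (q % n)).eval (fun _ => (q : R))) ∧
      ∀ a, a < n → (g a).natDegree = ℓ ∧ (g a).coeff ℓ = Pi.single i₀ 1 := by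
  have hdata (i : ι) : ∃ (d N : ℕ) (c : ℕ → ℕ), 0 < N ∧
      (∀ q, 0 < q → f i q = c (q % N) * q ^ d) ∧ if i = i₀ then d = ℓ ∧ c = 1 else d < ℓ := by
    by_cases hi : i = i₀
    · subst hi
      exact ⟨ℓ, 1, 1, one_pos, fun q _ => by simp [h₀], by simp⟩
    · obtain ⟨d, hd, N, hN, c, hc⟩ := hf i hi
      exact ⟨d, N, c, hN, hc, by simpa [hi]⟩
  choose d N c hN hfc hdc using hdata
  have hdle (i : ι) : d i ≤ ℓ := by
    have := hdc i
    split_ifs at this <;> omega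
  refine ⟨∏ i, N i, Finset.prod_pos fun i _ => hN i,
    fun a => ∑ i, monomial (d i) (Pi.single i (c i (a % N i) : R)), fun q hq => ?_, fun a _ => ?_⟩
  · rw [eval_sum_monomial_single]
    ext i
    rw [Nat.mod_mod_of_dvd _ (Finset.dvd_prod_of_mem N (Finset.mem_univ i)), hfc i q hq]
    push_cast
    rfl
  · have hcoeff : (∑ i, monomial (d i) (Pi.single i (c i (a % N i) : R))).coeff ℓ
        = Pi.single i₀ 1 := by
      rw [coeff_sum_monomial_single]
      ext i
      have := hdc i
      by_cases hi : i = i₀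
      · subst hi
        simp_all
      · rw [if_neg hi] at this
        simp [hi, this.ne]
    refine ⟨natDegree_eq_of_le_of_coeff_ne_zero ?_ ?_, hcoeff⟩
    · refine natDegree_le_iff_coeff_eq_zero.mpr fun k hk => ?_
      rw [coeff_sum_monomial_single]
      ext i
      simp [((hdle i).trans_lt hk).ne]
    · simp [hcoeff]

/-- The function `F : q ↦ χ_{L/qL}` (the permutation character of
`Γ` on `(ℤ/qℤ)^ℓ`, identifying the representation ring `R(Γ)` with characters,
i.e. `ℂ`-valued class functions `Γ → ℂ`) is a quasi-polynomial of degree `ℓ`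
whose leading coefficient is `(1/#Γ) · χ_reg`, where `χ_reg(γ) = #Γ` if
`γ = 1` and `0` otherwise. -/
theorem stmt9 (ℓ : ℕ) (Γ : Type) [Group Γ] [Fintype Γ] [DecidableEq Γ]
    (ρ : Γ →* Matrix.GeneralLinearGroup (Fin ℓ) ℤ) (hρ : Function.Injective ρ) :
    ∃ n : ℕ, 0 < n ∧ ∃ g : ℕ → Polynomial (Γ → ℂ),
      (∀ q : ℕ, 0 < q →
        (fun γ : Γ => (fixCard (ρ γ : Matrix (Fin ℓ) (Fin ℓ) ℤ) q : ℂ))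
          = (g (q % n)).eval (fun _ : Γ => (q : ℂ)))
      ∧ ∀ a : ℕ, a < n →
          (g a).natDegree = ℓ ∧
          (g a).coeff ℓ
            = (Fintype.card Γ : ℂ)⁻¹ •
                (fun γ : Γ => if γ = 1 then (Fintype.card Γ : ℂ) else 0) := by
  have hρ_ne_one (γ : Γ) (hγ : γ ≠ 1) : (ρ γ : Matrix (Fin ℓ) (Fin ℓ) ℤ) ≠ 1 := fun h =>
    hγ (hρ (Units.ext (by rw [h, map_one]; rfl)))
  obtain ⟨n, hn, g, heval, hg⟩ := exists_quasiPolynomial_of_isQuasiMonomial (R := ℂ)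
    (fun γ q => fixCard (ρ γ : Matrix (Fin ℓ) (Fin ℓ) ℤ) q) ℓ 1
    (fun q => by simpa using fixCard_one ℓ q)
    fun γ hγ => exists_lt_isQuasiMonomial_fixCard _ (hρ_ne_one γ hγ)
  refine ⟨n, hn, g, heval, fun a ha => ⟨(hg a ha).1, ?_⟩⟩
  rw [(hg a ha).2]
  ext γ
  by_cases hγ : γ = 1 <;> simp [hγ]
end

section
/- Let Γ = ℤ/6ℤ act on ℤ² via the generator σ acting by the matrix R_σ = [[0,1],[−1,1]] (right multiplication). Then for every positive integer q coprime to 6, the number of Γ-orbits of (ℤ/qℤ)² is (q² + 5)/6. -/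
/-- Let `Γ = ℤ/6ℤ` act on `ℤ²` via the generator `σ` acting by
the matrix `R_σ = [[0,1],[−1,1]]` (right multiplication on row vectors). For
every positive integer `q` coprime to `6`, the number of `Γ`-orbits of
`(ℤ/qℤ)²` is `(q² + 5)/6` (stated multiplicatively: `#orbits · 6 = q² + 5`).
Orbits are the classes of the relation `x ∼ y ↔ ∃ i, x · R_σ^i = y`. -/
theorem stmt16 (q : ℕ) (hq : 0 < q) (hcop : Nat.Coprime q 6) :
    Nat.card (Quot (fun x y : Fin 2 → ZMod q => ∃ i : ℕ,
        Matrix.vecMul x (((!![0, 1; -1, 1] : Matrix (Fin 2) (Fin 2) ℤ) ^ i).map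
          (Int.cast : ℤ → ZMod q)) = y)) * 6
      = q ^ 2 + 5 := by
  classical
  haveI : NeZero q := ⟨hq.ne'⟩
  set R : Matrix (Fin 2) (Fin 2) ℤ := !![0,1;-1,1] with hRdef
  set M : Matrix (Fin 2) (Fin 2) (ZMod q) := R.map (Int.cast : ℤ → ZMod q) with hMdef
  have hmap : ∀ i : ℕ, (R ^ i).map (Int.cast : ℤ → ZMod q) = M ^ i :=
    fun i => map_pow (Int.castRingHom (ZMod q)).mapMatrix R i
  have hR6 : R ^ 6 = 1 := by
    norm_num [hRdef, pow_succ, Matrix.mul_fin_two, ← Matrix.one_fin_two]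
  have hM6 : M ^ 6 = 1 := by
    rw [← hmap, hR6, Matrix.map_one _ Int.cast_zero Int.cast_one]
  have hpow : ∀ n : ℕ, M ^ n = M ^ (n % 6) := fun n => by
    conv_lhs => rw [← Nat.div_add_mod n 6, pow_add, pow_mul, hM6, one_pow, one_mul]
  -- key: if i % 6 ≠ 0 then the only fixed vector of M^i is 0
  have hfix : ∀ (i : ℕ), i % 6 ≠ 0 → ∀ x : Fin 2 → ZMod q,
      Matrix.vecMul x (M ^ i) = x → x = 0 := by
    intro i hi x hx
    set j := i % 6 with hj
    have hjlt : j < 6 := Nat.mod_lt _ (by norm_num)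
    -- determinant of R^j - 1 over ℤ
    have hdet : (R ^ j - 1).det = 1 ∨ (R ^ j - 1).det = 3 ∨ (R ^ j - 1).det = 4 := by
      interval_cases j
      · exact absurd rfl hi
      all_goals norm_num [hRdef, pow_succ, Matrix.mul_fin_two, ← Matrix.one_fin_two,
        Matrix.det_fin_two]
    -- the determinant is a unit mod q
    have hu : IsUnit (((R ^ j - 1).det : ℤ) : ZMod q) := by
      have h2 : Nat.Coprime 2 q := (Nat.Coprime.coprime_dvd_left (by norm_num) hcop.symm)
      have h3 : Nat.Coprime 3 q := (Nat.Coprime.coprime_dvd_left (by norm_num) hcop.symm)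
      rcases hdet with h | h | h <;> rw [h]
      · simp
      · have := (ZMod.isUnit_iff_coprime 3 q).mpr h3
        simpa using this
      · have := (ZMod.isUnit_iff_coprime 4 q).mpr (h2.pow_left 2)
        simpa using this
    -- x * (map (R^j - 1)) = 0
    set B : Matrix (Fin 2) (Fin 2) (ZMod q) := (R ^ j - 1).map (Int.cast : ℤ → ZMod q) with hB
    have hxB : Matrix.vecMul x B = 0 := by
      have : B = M ^ j - 1 := by
        rw [hB, Matrix.map_sub _ (fun a b => Int.cast_sub a b), hmap,
          Matrix.map_one _ Int.cast_zero Int.cast_one]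
      rw [this, Matrix.vecMul_sub, Matrix.vecMul_one, ← hpow, hx, sub_self]
    have hdetB : IsUnit B.det := by
      have : B.det = (((R ^ j - 1).det : ℤ) : ZMod q) := by
        rw [hB]; exact ((Int.castRingHom (ZMod q)).map_det _).symm
      rw [this]; exact hu
    have h0 : B.det • x = 0 := by
      have h := congrArg (fun v => Matrix.vecMul v B.adjugate) hxB
      simp only [Matrix.vecMul_vecMul, Matrix.mul_adjugate, Matrix.zero_vecMul] at h
      rw [← h]
      ext k
      simp [Matrix.vecMul, dotProduct, Matrix.one_apply, Matrix.smul_apply,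
        mul_comm, Finset.mul_sum]
    have := congrArg (fun v => (↑hdetB.unit⁻¹ : ZMod q) • v) h0
    simpa [smul_smul, IsUnit.val_inv_mul] using this
  -- the action of Multiplicative (ZMod 6)
  letI : SMul (Multiplicative (ZMod 6)) (Fin 2 → ZMod q) :=
    ⟨fun g x => Matrix.vecMul x (M ^ (Multiplicative.toAdd g).val)⟩
  have hsmul : ∀ (g : Multiplicative (ZMod 6)) (x : Fin 2 → ZMod q),
      g • x = Matrix.vecMul x (M ^ (Multiplicative.toAdd g).val) := fun _ _ => rfl
  letI : MulAction (Multiplicative (ZMod 6)) (Fin 2 → ZMod q) :=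
    { one_smul := fun x => by
        simp [hsmul, Matrix.vecMul_one]
      mul_smul := fun g h x => by
        rw [hsmul, hsmul, hsmul, Matrix.vecMul_vecMul, ← pow_add, toAdd_mul]
        have hval : ((Multiplicative.toAdd g + Multiplicative.toAdd h).val) % 6
            = ((Multiplicative.toAdd h).val + (Multiplicative.toAdd g).val) % 6 := by
          rw [ZMod.val_add]; omega
        rw [hpow ((Multiplicative.toAdd g + Multiplicative.toAdd h).val), hval, ← hpow] }
  -- helper : inverse action
  have hinv : ∀ (x : Fin 2 → ZMod q) (a : ZMod 6),
      Matrix.vecMul (Matrix.vecMul x (M ^ a.val)) (M ^ (-a).val) = x := by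
    intro x a
    rw [Matrix.vecMul_vecMul, ← pow_add, hpow]
    have : ((a.val + (-a).val : ℕ) : ZMod 6) = 0 := by
      push_cast [ZMod.natCast_val, ZMod.cast_id]
      ring
    rw [(ZMod.natCast_eq_zero_iff _ 6).mp this |> Nat.mod_eq_zero_of_dvd]
    simp [Matrix.vecMul_one]
  -- identify the quotient with the orbit quotient
  have hiff : ∀ x y : Fin 2 → ZMod q,
      (∃ i : ℕ, Matrix.vecMul x ((R ^ i).map (Int.cast : ℤ → ZMod q)) = y) ↔
      MulAction.orbitRel (Multiplicative (ZMod 6)) (Fin 2 → ZMod q) x y := by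
    intro x y
    constructor
    · rintro ⟨i, hi⟩
      refine ⟨Multiplicative.ofAdd (-(i : ZMod 6)), ?_⟩
      simp only [hsmul]
      have hMi : Matrix.vecMul x (M ^ i) = Matrix.vecMul x (M ^ ((i : ZMod 6)).val) := by
        rw [hpow i, ZMod.val_natCast]
      rw [hmap] at hi
      rw [← hi, hMi]
      simpa using hinv x (i : ZMod 6)
    · rintro ⟨g, hg⟩
      simp only [hsmul] at hg
      refine ⟨(-(Multiplicative.toAdd g)).val, ?_⟩
      rw [hmap, ← hg, hinv y (Multiplicative.toAdd g)]
  have hquot : Nat.card (Quot (fun x y : Fin 2 → ZMod q => ∃ i : ℕ,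
      Matrix.vecMul x ((R ^ i).map (Int.cast : ℤ → ZMod q)) = y))
      = Nat.card (Quotient (MulAction.orbitRel (Multiplicative (ZMod 6)) (Fin 2 → ZMod q))) :=
    Nat.card_congr (Quot.congrRight hiff)
  rw [hquot]
  -- Burnside
  letI instF : ∀ g : Multiplicative (ZMod 6),
      Fintype (MulAction.fixedBy (Fin 2 → ZMod q) g) := fun g => Fintype.ofFinite _
  letI instO : Fintype (Quotient (MulAction.orbitRel (Multiplicative (ZMod 6))
      (Fin 2 → ZMod q))) := Fintype.ofFinite _
  have hb := MulAction.sum_card_fixedBy_eq_card_orbits_mul_card_group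
    (Multiplicative (ZMod 6)) (Fin 2 → ZMod q)
  -- fixed-point sets
  have hfb : ∀ g : Multiplicative (ZMod 6), g ≠ 1 →
      MulAction.fixedBy (Fin 2 → ZMod q) g = {0} := by
    intro g hg
    ext x
    simp only [MulAction.mem_fixedBy, Set.mem_singleton_iff, hsmul]
    constructor
    · intro hx
      refine hfix ((Multiplicative.toAdd g).val) ?_ x hx
      rw [Nat.mod_eq_of_lt (ZMod.val_lt _)]
      intro h0
      apply hg
      have h1 : Multiplicative.toAdd g = 0 := (ZMod.val_eq_zero _).mp h0
      have := congrArg Multiplicative.ofAdd h1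
      simpa using this
    · rintro rfl
      simp [Matrix.zero_vecMul]
  have hcard1 : ∀ g : Multiplicative (ZMod 6), g ≠ 1 →
      Fintype.card (MulAction.fixedBy (Fin 2 → ZMod q) g) = 1 := by
    intro g hg
    rw [← Nat.card_eq_fintype_card, hfb g hg]
    exact Nat.card_unique
  have hcard0 : Fintype.card (MulAction.fixedBy (Fin 2 → ZMod q)
      (1 : Multiplicative (ZMod 6))) = q ^ 2 := by
    rw [← Nat.card_eq_fintype_card, MulAction.fixedBy_one_eq_univ]
    rw [Nat.card_congr (Equiv.Set.univ _)]
    simp [Nat.card_eq_fintype_card, Fintype.card_fun, ZMod.card, sq]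
  have hsum : (∑ g : Multiplicative (ZMod 6),
      Fintype.card (MulAction.fixedBy (Fin 2 → ZMod q) g)) = q ^ 2 + 5 := by
    rw [← Finset.add_sum_erase Finset.univ _ (Finset.mem_univ (1 : Multiplicative (ZMod 6)))]
    rw [hcard0]
    congr 1
    rw [Finset.sum_congr rfl (fun g hg => hcard1 g (Finset.ne_of_mem_erase hg)),
      Finset.sum_const, smul_eq_mul, mul_one, Finset.card_erase_of_mem (Finset.mem_univ _),
      Finset.card_univ]
    simp
  rw [hsum] at hb
  rw [Nat.card_eq_fintype_card]
  have h6 : Fintype.card (Multiplicative (ZMod 6)) = 6 := by simp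
  rw [hb, h6]
end

section
/- Let Γ = 𝔖₃ act on the A₂ root lattice L = ℤ(e₁−e₂) ⊕ ℤ(e₂−e₃) by permuting coordinates, and let δ be the sign character. Then for every positive integer q coprime to 3, the multiplicity of δ in the permutation character of Γ on L/qL equals (q² − 3q + 2)/6 = (q−1)(q−2)/6. -/
private lemma cardA (q : ℕ) [NeZero q] (c : ZMod q) :
    Nat.card {x : Fin 2 → ZMod q // x 1 = c * x 0} = q := by
  have e : {x : Fin 2 → ZMod q // x 1 = c * x 0} ≃ ZMod q :=
    { toFun := fun x => x.1 0
      invFun := fun a => ⟨![a, c * a], by simp⟩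
      left_inv := fun x => Subtype.ext (by funext i; fin_cases i <;> simp [x.2])
      right_inv := fun a => rfl }
  rw [Nat.card_congr e, Nat.card_zmod]

private lemma cardB (q : ℕ) [NeZero q] (c : ZMod q) :
    Nat.card {x : Fin 2 → ZMod q // x 0 = c * x 1} = q := by
  have e : {x : Fin 2 → ZMod q // x 0 = c * x 1} ≃ ZMod q :=
    { toFun := fun x => x.1 1
      invFun := fun a => ⟨![c * a, a], by simp⟩
      left_inv := fun x => Subtype.ext (by funext i; fin_cases i <;> simp [x.2])
      right_inv := fun a => rfl }
  rw [Nat.card_congr e, Nat.card_zmod]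

private lemma cardZ (q : ℕ) [NeZero q] :
    Nat.card {x : Fin 2 → ZMod q // x = 0} = 1 := by
  haveI : Unique {x : Fin 2 → ZMod q // x = 0} :=
    ⟨⟨⟨0, rfl⟩⟩, fun a => Subtype.ext a.2⟩
  exact Nat.card_unique

private lemma cardU (q : ℕ) [NeZero q] :
    Nat.card (Fin 2 → ZMod q) = q ^ 2 := by
  simp [Nat.card_fun, Nat.card_zmod, Nat.card_eq_fintype_card]

/-- With `𝔖₃` acting on the `A₂` root lattice as in the previous
statement (encoded by matrices `ρ σ` intertwining the embedding
`ι(x) = (x₀, x₁−x₀, −x₁)` with coordinate permutation), and `δ` the sign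
character, for every `q > 0` coprime to `3` the multiplicity of `δ` in the
permutation character of `𝔖₃` on `L/qL`, namely
`(1/6) Σ_σ sgn(σ) · #{x ∈ (ℤ/qℤ)² : x ρ(σ) = x}`, equals `(q² − 3q + 2)/6`. -/
theorem stmt18
    (ρ : Equiv.Perm (Fin 3) →* Matrix.GeneralLinearGroup (Fin 2) ℤ)
    (hρ : ∀ (σ : Equiv.Perm (Fin 3)) (x : Fin 2 → ℤ) (j : Fin 3),
      (![Matrix.vecMul x (ρ σ : Matrix (Fin 2) (Fin 2) ℤ) 0,
          Matrix.vecMul x (ρ σ : Matrix (Fin 2) (Fin 2) ℤ) 1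
            - Matrix.vecMul x (ρ σ : Matrix (Fin 2) (Fin 2) ℤ) 0,
          -(Matrix.vecMul x (ρ σ : Matrix (Fin 2) (Fin 2) ℤ) 1)] : Fin 3 → ℤ) j
        = (![x 0, x 1 - x 0, -(x 1)] : Fin 3 → ℤ) (σ⁻¹ j))
    (q : ℕ) (hq : 0 < q) (hcop : Nat.Coprime q 3) :
    (6 : ℂ)⁻¹ * ∑ σ : Equiv.Perm (Fin 3), ((Equiv.Perm.sign σ : ℤ) : ℂ) *
        (Nat.card {x : Fin 2 → ZMod q //
          Matrix.vecMul x ((ρ σ : Matrix (Fin 2) (Fin 2) ℤ).map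
            (Int.cast : ℤ → ZMod q)) = x} : ℂ)
      = ((q : ℂ) ^ 2 - 3 * q + 2) / 6 := by
  haveI : NeZero q := ⟨hq.ne'⟩
  have h3 : IsUnit (3 : ZMod q) := by
    have := (ZMod.isUnit_iff_coprime 3 q).2 hcop.symm
    simpa using this
  have h3' : ∀ y : ZMod q, (3 : ZMod q) * y = 0 → y = 0 := by
    intro y hy
    rcases h3 with ⟨u, hu⟩
    calc y = (u⁻¹ : (ZMod q)ˣ) * ((3 : ZMod q) * y) := by
          rw [← hu, ← mul_assoc]; simp
      _ = 0 := by rw [hy, mul_zero]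
  have key : ∀ σ : Equiv.Perm (Fin 3), (ρ σ : Matrix (Fin 2) (Fin 2) ℤ) =
      !![(![1,-1,0] : Fin 3 → ℤ) (σ⁻¹ 0), -((![1,-1,0] : Fin 3 → ℤ) (σ⁻¹ 2));
         (![0,1,-1] : Fin 3 → ℤ) (σ⁻¹ 0), -((![0,1,-1] : Fin 3 → ℤ) (σ⁻¹ 2))] := by
    intro σ
    have h00 := hρ σ ![1,0] 0
    have h02 := hρ σ ![1,0] 2
    have h10 := hρ σ ![0,1] 0
    have h12 := hρ σ ![0,1] 2
    simp [Matrix.vecMul, dotProduct, Fin.sum_univ_two] at h00 h02 h10 h12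
    ext i j
    fin_cases i <;> fin_cases j <;> simp <;> linarith
  have m1 : (ρ 1 : Matrix (Fin 2) (Fin 2) ℤ) = 1 := by rw [key]; decide
  have m2 : (ρ (Equiv.swap 0 1) : Matrix (Fin 2) (Fin 2) ℤ) = !![-1,0;1,1] := by
    rw [key]; decide
  have m3 : (ρ (Equiv.swap 0 2) : Matrix (Fin 2) (Fin 2) ℤ) = !![0,-1;-1,0] := by
    rw [key]; decide
  have m4 : (ρ (Equiv.swap 1 2) : Matrix (Fin 2) (Fin 2) ℤ) = !![1,1;0,-1] := by
    rw [key]; decide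
  have m5 : (ρ (Equiv.swap 0 1 * Equiv.swap 1 2) : Matrix (Fin 2) (Fin 2) ℤ)
      = !![0,1;-1,-1] := by rw [key]; decide
  have m6 : (ρ (Equiv.swap 1 2 * Equiv.swap 0 1) : Matrix (Fin 2) (Fin 2) ℤ)
      = !![-1,-1;1,0] := by rw [key]; decide
  have c1 : Nat.card {x : Fin 2 → ZMod q //
      Matrix.vecMul x ((ρ 1 : Matrix (Fin 2) (Fin 2) ℤ).map (Int.cast : ℤ → ZMod q)) = x}
      = q ^ 2 := by
    rw [m1]
    have hone : (1 : Matrix (Fin 2) (Fin 2) ℤ).map (Int.cast : ℤ → ZMod q) = 1 :=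
      Matrix.map_one _ Int.cast_zero Int.cast_one
    rw [Nat.card_congr (Equiv.subtypeUnivEquiv (fun x => by rw [hone, Matrix.vecMul_one]))]
    exact cardU q
  have c2 : Nat.card {x : Fin 2 → ZMod q //
      Matrix.vecMul x ((ρ (Equiv.swap 0 1) : Matrix (Fin 2) (Fin 2) ℤ).map
        (Int.cast : ℤ → ZMod q)) = x} = q := by
    rw [m2]
    rw [Nat.card_congr (Equiv.subtypeEquivRight (q := fun x : Fin 2 → ZMod q => x 1 = 2 * x 0)
      (fun x => by
        simp only [funext_iff, Fin.forall_fin_two, Matrix.vecMul, dotProduct,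
          Fin.sum_univ_two, Matrix.map_apply, Matrix.cons_val', Matrix.cons_val_zero,
          Matrix.cons_val_one, Matrix.head_cons, Matrix.empty_val', Matrix.cons_val_fin_one,
          Matrix.head_fin_const, Matrix.of_apply]
        push_cast
        constructor
        · rintro ⟨h1, h2⟩; linear_combination h1
        · intro h; exact ⟨by linear_combination h, by ring⟩))]
    exact cardA q 2
  have c3 : Nat.card {x : Fin 2 → ZMod q //
      Matrix.vecMul x ((ρ (Equiv.swap 0 2) : Matrix (Fin 2) (Fin 2) ℤ).map
        (Int.cast : ℤ → ZMod q)) = x} = q := by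
    rw [m3]
    rw [Nat.card_congr (Equiv.subtypeEquivRight (q := fun x : Fin 2 → ZMod q => x 0 = -1 * x 1)
      (fun x => by
        simp only [funext_iff, Fin.forall_fin_two, Matrix.vecMul, dotProduct,
          Fin.sum_univ_two, Matrix.map_apply, Matrix.cons_val', Matrix.cons_val_zero,
          Matrix.cons_val_one, Matrix.head_cons, Matrix.empty_val', Matrix.cons_val_fin_one,
          Matrix.head_fin_const, Matrix.of_apply]
        push_cast
        constructor
        · rintro ⟨h1, h2⟩; linear_combination -h1
        · intro h; exact ⟨by linear_combination -h, by linear_combination -h⟩))]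
    exact cardB q (-1)
  have c4 : Nat.card {x : Fin 2 → ZMod q //
      Matrix.vecMul x ((ρ (Equiv.swap 1 2) : Matrix (Fin 2) (Fin 2) ℤ).map
        (Int.cast : ℤ → ZMod q)) = x} = q := by
    rw [m4]
    rw [Nat.card_congr (Equiv.subtypeEquivRight (q := fun x : Fin 2 → ZMod q => x 0 = 2 * x 1)
      (fun x => by
        simp only [funext_iff, Fin.forall_fin_two, Matrix.vecMul, dotProduct,
          Fin.sum_univ_two, Matrix.map_apply, Matrix.cons_val', Matrix.cons_val_zero,
          Matrix.cons_val_one, Matrix.head_cons, Matrix.empty_val', Matrix.cons_val_fin_one,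
          Matrix.head_fin_const, Matrix.of_apply]
        push_cast
        constructor
        · rintro ⟨h1, h2⟩; linear_combination h2
        · intro h; exact ⟨by ring, by linear_combination h⟩))]
    exact cardB q 2
  have c5 : Nat.card {x : Fin 2 → ZMod q //
      Matrix.vecMul x ((ρ (Equiv.swap 0 1 * Equiv.swap 1 2) : Matrix (Fin 2) (Fin 2) ℤ).map
        (Int.cast : ℤ → ZMod q)) = x} = 1 := by
    rw [m5]
    rw [Nat.card_congr (Equiv.subtypeEquivRight (q := fun x : Fin 2 → ZMod q => x = 0)
      (fun x => by
        simp only [funext_iff, Fin.forall_fin_two, Matrix.vecMul, dotProduct,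
          Fin.sum_univ_two, Matrix.map_apply, Matrix.cons_val', Matrix.cons_val_zero,
          Matrix.cons_val_one, Matrix.head_cons, Matrix.empty_val', Matrix.cons_val_fin_one,
          Matrix.head_fin_const, Matrix.of_apply, Pi.zero_apply]
        push_cast
        constructor
        · rintro ⟨h1, h2⟩
          have h31 : (3 : ZMod q) * x 1 = 0 := by linear_combination -h1 - h2
          have hx1 : x 1 = 0 := h3' _ h31
          exact ⟨by linear_combination -h1 - hx1, hx1⟩
        · rintro ⟨h0, h1⟩; constructor <;> simp [h0, h1]))]
    exact cardZ q
  have c6 : Nat.card {x : Fin 2 → ZMod q //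
      Matrix.vecMul x ((ρ (Equiv.swap 1 2 * Equiv.swap 0 1) : Matrix (Fin 2) (Fin 2) ℤ).map
        (Int.cast : ℤ → ZMod q)) = x} = 1 := by
    rw [m6]
    rw [Nat.card_congr (Equiv.subtypeEquivRight (q := fun x : Fin 2 → ZMod q => x = 0)
      (fun x => by
        simp only [funext_iff, Fin.forall_fin_two, Matrix.vecMul, dotProduct,
          Fin.sum_univ_two, Matrix.map_apply, Matrix.cons_val', Matrix.cons_val_zero,
          Matrix.cons_val_one, Matrix.head_cons, Matrix.empty_val', Matrix.cons_val_fin_one,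
          Matrix.head_fin_const, Matrix.of_apply, Pi.zero_apply]
        push_cast
        constructor
        · rintro ⟨h1, h2⟩
          have h30 : (3 : ZMod q) * x 0 = 0 := by linear_combination -h1 - h2
          have hx0 : x 0 = 0 := h3' _ h30
          exact ⟨hx0, by linear_combination -h2 - hx0⟩
        · rintro ⟨h0, h1⟩; constructor <;> simp [h0, h1]))]
    exact cardZ q
  have huniv : (Finset.univ : Finset (Equiv.Perm (Fin 3))) =
      {1, Equiv.swap 0 1, Equiv.swap 0 2, Equiv.swap 1 2,
       Equiv.swap 0 1 * Equiv.swap 1 2, Equiv.swap 1 2 * Equiv.swap 0 1} := by decide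
  rw [huniv]
  rw [Finset.sum_insert (by decide), Finset.sum_insert (by decide),
    Finset.sum_insert (by decide), Finset.sum_insert (by decide),
    Finset.sum_insert (by decide), Finset.sum_singleton]
  rw [c1, c2, c3, c4, c5, c6]
  have s1 : ((Equiv.Perm.sign (1 : Equiv.Perm (Fin 3)) : ℤ) : ℂ) = 1 := by norm_num
  have s2 : ((Equiv.Perm.sign (Equiv.swap (0 : Fin 3) 1) : ℤ) : ℂ) = -1 := by
    rw [Equiv.Perm.sign_swap (by decide)]; norm_num
  have s3 : ((Equiv.Perm.sign (Equiv.swap (0 : Fin 3) 2) : ℤ) : ℂ) = -1 := by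
    rw [Equiv.Perm.sign_swap (by decide)]; norm_num
  have s4 : ((Equiv.Perm.sign (Equiv.swap (1 : Fin 3) 2) : ℤ) : ℂ) = -1 := by
    rw [Equiv.Perm.sign_swap (by decide)]; norm_num
  have s5 : ((Equiv.Perm.sign (Equiv.swap (0 : Fin 3) 1 * Equiv.swap 1 2) : ℤ) : ℂ) = 1 := by
    rw [map_mul, Equiv.Perm.sign_swap (by decide), Equiv.Perm.sign_swap (by decide)]; norm_num
  have s6 : ((Equiv.Perm.sign (Equiv.swap (1 : Fin 3) 2 * Equiv.swap 0 1) : ℤ) : ℂ) = 1 := by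
    rw [map_mul, Equiv.Perm.sign_swap (by decide), Equiv.Perm.sign_swap (by decide)]; norm_num
  rw [s1, s2, s3, s4, s5, s6]
  push_cast
  field_simp
  ring
end

section
/- Let Γ be a finite group acting on L ≅ ℤ^ℓ via injective ρ : Γ → GL(L). Then for every positive integer q coprime to ñ = lcm{e_{γ,r(γ)} : γ ∈ Γ}, the multiplicity of each irreducible character χ_i in the permutation character of Γ on L/qL is (1/#Γ) Σ_{γ∈Γ} χ_i(γ) q^{ℓ−r(γ)}, where r(γ) = rank(R_γ − I_ℓ). -/
open Matrix in
lemma fixCard_eq_s19 {ℓ : ℕ} (M S T : Matrix (Fin ℓ) (Fin ℓ) ℤ) (q r : ℕ) (hq : 0 < q)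
    (hS : IsUnit S.det) (hT : IsUnit T.det) (d : Fin ℓ → ℤ)
    (hSNF : S * (M - 1) * T = Matrix.diagonal d)
    (hr : r ≤ ℓ)
    (hunit : ∀ i : Fin ℓ, (i : ℕ) < r → IsUnit ((d i : ZMod q)))
    (hzero : ∀ i : Fin ℓ, r ≤ (i : ℕ) → d i = 0) :
    Nat.card {x : Fin ℓ → ZMod q // Matrix.vecMul x (M.map (Int.cast : ℤ → ZMod q)) = x}
      = q ^ (ℓ - r) := by
  haveI : NeZero q := ⟨hq.ne'⟩
  set f := Int.castRingHom (ZMod q) with hf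
  have hmap : ∀ N : Matrix (Fin ℓ) (Fin ℓ) ℤ, N.map (Int.cast : ℤ → ZMod q) = N.map f := by
    intro N; rfl
  set A : Matrix (Fin ℓ) (Fin ℓ) (ZMod q) := M.map f with hA
  set S' : Matrix (Fin ℓ) (Fin ℓ) (ZMod q) := S.map f with hS'
  set T' : Matrix (Fin ℓ) (Fin ℓ) (ZMod q) := T.map f with hT'
  set D : Matrix (Fin ℓ) (Fin ℓ) (ZMod q) := Matrix.diagonal (fun i => (d i : ZMod q)) with hD
  have hS'u : IsUnit S'.det := by
    have h := f.map_det S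
    rw [RingHom.mapMatrix_apply] at h
    rw [hS', ← h]; exact hS.map f
  have hT'u : IsUnit T'.det := by
    have h := f.map_det T
    rw [RingHom.mapMatrix_apply] at h
    rw [hT', ← h]; exact hT.map f
  have hkey : S' * (A - 1) * T' = D := by
    have := congrArg (fun N : Matrix (Fin ℓ) (Fin ℓ) ℤ => N.map f) hSNF
    simpa [Matrix.map_mul, Matrix.map_sub, Matrix.map_one f f.map_zero f.map_one,
      Matrix.diagonal_map f.map_zero, hA, hS', hT', hD] using this
  -- chain of equivs
  have e1 : {x : Fin ℓ → ZMod q // vecMul x A = x} ≃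
      {x : Fin ℓ → ZMod q // vecMul x (A - 1) = 0} :=
    Equiv.subtypeEquivRight (fun x => by
      rw [Matrix.vecMul_sub, Matrix.vecMul_one, sub_eq_zero])
  have e2 : {x : Fin ℓ → ZMod q // vecMul x (A - 1) = 0} ≃
      {y : Fin ℓ → ZMod q // vecMul y D = 0} := by
    refine ⟨fun x => ⟨vecMul x.1 S'⁻¹, ?_⟩, fun y => ⟨vecMul y.1 S', ?_⟩, ?_, ?_⟩
    · rw [Matrix.vecMul_vecMul, ← hkey, ← Matrix.mul_assoc, ← Matrix.mul_assoc,
        Matrix.nonsing_inv_mul _ hS'u, Matrix.one_mul,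
        ← Matrix.vecMul_vecMul, x.2, Matrix.zero_vecMul]
    · have h0 : (vecMul (vecMul y.1 S') (A - 1)) ᵥ* T' = 0 := by
        rw [Matrix.vecMul_vecMul, Matrix.vecMul_vecMul, ← Matrix.mul_assoc, hkey, y.2]
      have := congrArg (fun v => v ᵥ* T'⁻¹) h0
      simpa [Matrix.vecMul_vecMul, Matrix.mul_assoc, Matrix.mul_nonsing_inv _ hT'u] using this
    · intro x
      ext1
      simp [Matrix.vecMul_vecMul, Matrix.nonsing_inv_mul _ hS'u]
    · intro y
      ext1
      simp [Matrix.vecMul_vecMul, Matrix.mul_nonsing_inv _ hS'u]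
  have e3 : {y : Fin ℓ → ZMod q // vecMul y D = 0} ≃
      {y : Fin ℓ → ZMod q // ∀ i : Fin ℓ, (i : ℕ) < r → y i = 0} :=
    Equiv.subtypeEquivRight (fun y => by
      constructor
      · intro h i hi
        have hyi : y i * (d i : ZMod q) = 0 := by
          have := congrFun h i
          simpa [hD, Matrix.vecMul_diagonal] using this
        have hu := hunit i hi
        rcases hu with ⟨u, hu⟩
        have : y i * (d i : ZMod q) * (↑u⁻¹ : ZMod q) = 0 := by rw [hyi, zero_mul]
        rwa [mul_assoc, ← hu, Units.mul_inv, mul_one] at this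
      · intro h
        funext i
        rw [hD, Matrix.vecMul_diagonal]
        by_cases hi : (i : ℕ) < r
        · rw [h i hi, zero_mul]; rfl
        · rw [hzero i (le_of_not_gt hi)]
          simp)
  have e4 : {y : Fin ℓ → ZMod q // ∀ i : Fin ℓ, (i : ℕ) < r → y i = 0} ≃
      ({i : Fin ℓ // r ≤ (i : ℕ)} → ZMod q) := by
    refine ⟨fun y i => y.1 i.1, fun g => ⟨fun i => if h : r ≤ (i : ℕ) then g ⟨i, h⟩ else 0, ?_⟩,
      ?_, ?_⟩
    · intro i hi; exact dif_neg (not_le.mpr hi)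
    · intro y
      ext i
      by_cases h : r ≤ (i : ℕ)
      · simp [dif_pos h]
      · simp only [dif_neg h]
        exact (y.2 i (by omega)).symm
    · intro g
      funext i
      simp [dif_pos i.2]
  have e5 : {i : Fin ℓ // r ≤ (i : ℕ)} ≃ Fin (ℓ - r) := by
    refine ⟨fun i => ⟨(i : ℕ) - r, by have := i.1.2; have := i.2; omega⟩,
      fun j => ⟨⟨j + r, by have := j.2; omega⟩, by simp⟩, ?_, ?_⟩
    · intro i; apply Subtype.ext; apply Fin.ext; have := i.2; simp; omega
    · intro j; apply Fin.ext; simp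
  rw [hmap, ← hA]
  rw [Nat.card_congr (((e1.trans e2).trans e3).trans (e4.trans (e5.arrowCongr (Equiv.refl _))))]
  rw [Nat.card_fun]
  simp [Nat.card_eq_fintype_card, ZMod.card]

/-- For a finite group `Γ` acting on `ℤ^ℓ` via an injective
`ρ : Γ → GL_ℓ(ℤ)` and a positive integer `q` coprime to
`ñ = lcm { e_{γ, r(γ)} : γ ∈ Γ }` (the lcm of the largest elementary divisors
`e γ` of the `R_γ − I`, taken to be `1` when `r γ = 0`), the multiplicity of
each irreducible character `χ_i` in the permutation character of `Γ` on
`(ℤ/qℤ)^ℓ` is `(1/#Γ) Σ_γ χ_i(γ) q^(ℓ − r(γ))`, where `r(γ) = rank(R_γ − I)`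
(encoded by Smith normal forms). -/
theorem stmt19 (ℓ : ℕ) (Γ : Type) [Group Γ] [Fintype Γ]
    (ρ : Γ →* Matrix.GeneralLinearGroup (Fin ℓ) ℤ) (hρ : Function.Injective ρ)
    (V : FDRep ℂ Γ) (hV : CategoryTheory.Simple V)
    (r : Γ → ℕ) (hr : ∀ γ, r γ ≤ ℓ)
    (S T : Γ → Matrix (Fin ℓ) (Fin ℓ) ℤ)
    (hS : ∀ γ, IsUnit (S γ).det) (hT : ∀ γ, IsUnit (T γ).det)
    (d : Γ → Fin ℓ → ℤ)
    (hSNF : ∀ γ, S γ * ((ρ γ : Matrix (Fin ℓ) (Fin ℓ) ℤ) - 1) * T γ = Matrix.diagonal (d γ))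
    (hpos : ∀ γ, ∀ i : Fin ℓ, (i : ℕ) < r γ → 0 < d γ i)
    (hzero : ∀ γ, ∀ i : Fin ℓ, r γ ≤ (i : ℕ) → d γ i = 0)
    (hdvd : ∀ γ, ∀ i j : Fin ℓ, i ≤ j → (j : ℕ) < r γ → d γ i ∣ d γ j)
    (e : Γ → ℕ)
    (he : ∀ γ, (r γ = 0 ∧ e γ = 1) ∨ ∃ i : Fin ℓ, (i : ℕ) + 1 = r γ ∧ (e γ : ℤ) = d γ i)
    (q : ℕ) (hq : 0 < q) (hcop : Nat.Coprime q (Finset.univ.lcm e)) :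
    (Fintype.card Γ : ℂ)⁻¹ * ∑ γ : Γ, V.character γ *
        (starRingEnd ℂ) ((fixCard (ρ γ : Matrix (Fin ℓ) (Fin ℓ) ℤ) q : ℂ))
      = (Fintype.card Γ : ℂ)⁻¹ * ∑ γ : Γ, V.character γ * (q : ℂ) ^ (ℓ - r γ) := by
  congr 1
  refine Finset.sum_congr rfl fun γ _ => ?_
  have hunit : ∀ i : Fin ℓ, (i : ℕ) < r γ → IsUnit ((d γ i : ZMod q)) := by
    intro i hi
    rcases he γ with ⟨h0, _⟩ | ⟨j, hj1, hj2⟩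
    · omega
    · have hij : i ≤ j := by
        rw [Fin.le_def]; omega
    -- d γ i ∣ e γ
      have hdij : d γ i ∣ d γ j := hdvd γ i j hij (by omega)
      have hde : d γ i ∣ (e γ : ℤ) := hj2 ▸ hdij
      have hnn : (0 : ℤ) ≤ d γ i := (hpos γ i hi).le
      have hcast : ((d γ i).toNat : ℤ) = d γ i := Int.toNat_of_nonneg hnn
      have hdvd' : (d γ i).toNat ∣ e γ := by
        rw [← Int.natCast_dvd_natCast, hcast]; exact hde
      have hlcm : (d γ i).toNat ∣ Finset.univ.lcm e :=
        hdvd'.trans (Finset.dvd_lcm (Finset.mem_univ γ))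
      have hcq : ((d γ i).toNat).Coprime q := (hcop.coprime_dvd_right hlcm).symm
      have : IsUnit (((d γ i).toNat : ℕ) : ZMod q) := (ZMod.isUnit_iff_coprime _ q).mpr hcq
      rwa [← hcast, Int.cast_natCast]
  have hfix : fixCard (ρ γ : Matrix (Fin ℓ) (Fin ℓ) ℤ) q = q ^ (ℓ - r γ) :=
    fixCard_eq_s19 _ (S γ) (T γ) q (r γ) hq (hS γ) (hT γ) (d γ) (hSNF γ) (hr γ) hunit (hzero γ)
  rw [hfix]
  congr 1
  push_cast
  rw [map_pow, map_natCast]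
end
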